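/- Let Λ be a locally compact Hausdorff space equipped with a continuous free action of the circle group 𝕋, and let E := {f ∈ C₀(Λ,ℂ) : f(tλ) = t·f(λ) for all t ∈ 𝕋, λ ∈ Λ}, a commutative JB*-triple with triple product {a,b,c} := a·b̅·c. Then E is almost ternary weakly amenable: for every continuous ternary derivation δ : E → E* and every ε > 0 there exists an inner ternary derivation θ : E → E* with ‖δ − θ‖ < ε; that is, the inner ternary derivations are norm-dense in the set of all continuous ternary derivations from E to E*. -/

import Mathlib

/-!
STATEMENT 19: Let `Λ` be a locally compact Hausdorff space with a continuous free
action of the circle group `𝕋`, and let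
`E := C₀^𝕋(Λ) = {f ∈ C₀(Λ,ℂ) : f(tλ) = t·f(λ)}`, a commutative JB*-triple with
triple product `{a,b,c} := a·b̅·c`.  Then `E` is almost ternary weakly amenable:
for every continuous (conjugate-linear) ternary derivation `δ : E → E*` and every
`ε > 0` there is an inner ternary derivation `θ : E → E*` with `‖δ − θ‖ < ε`.

Here `E` is realized as the subspace of the bounded continuous functions `Λ →ᵇ ℂ`
consisting of those functions that vanish at infinity (equivalently, elements of
`C₀(Λ,ℂ)`) and are `𝕋`-equivariant.
-/

open scoped BoundedContinuousFunction ComplexConjugate Topology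

noncomputable section

variable (Λ : Type*) [TopologicalSpace Λ] [LocallyCompactSpace Λ] [T2Space Λ]
  [MulAction Circle Λ] [ContinuousSMul Circle Λ]

/-- `E = C₀^𝕋(Λ)`: the continuous bounded functions `Λ → ℂ` vanishing at infinity
(i.e. belonging to `C₀(Λ,ℂ)`) such that `f(tλ) = t f(λ)`, as a subspace of `Λ →ᵇ ℂ`. -/
def ET : Submodule ℂ (Λ →ᵇ ℂ) where
  carrier := {f | Filter.Tendsto ⇑f (Filter.cocompact Λ) (𝓝 0)
    ∧ ∀ (t : Circle) (l : Λ), f (t • l) = (t : ℂ) * f l}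
  add_mem' := by
    rintro f g ⟨hf0, hf⟩ ⟨hg0, hg⟩
    refine ⟨by rw [BoundedContinuousFunction.coe_add]; simpa [Pi.add_def] using hf0.add hg0, fun t l => ?_⟩
    simp [hf t l, hg t l, mul_add]
  zero_mem' := ⟨by rw [BoundedContinuousFunction.coe_zero]; exact tendsto_const_nhds, fun t l => by simp⟩
  smul_mem' := by
    rintro c f ⟨hf0, hf⟩
    refine ⟨by simpa using hf0.const_smul c, fun t l => ?_⟩
    simp only [BoundedContinuousFunction.coe_smul, Pi.smul_apply, smul_eq_mul, hf t l]
    ring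

variable {Λ}

lemma ET.trip_mem {a b c : Λ →ᵇ ℂ} (ha : a ∈ ET Λ) (hb : b ∈ ET Λ) (hc : c ∈ ET Λ) :
    a * star b * c ∈ ET Λ := by
  constructor
  · refine squeeze_zero_norm (a := fun l => ‖a l‖ * ‖star b * c‖) (fun l => ?_) ?_
    · have h1 : (a * star b * c) l = a l * ((star b * c) l) := by
        simp [mul_assoc]
      rw [h1, norm_mul]
      exact mul_le_mul_of_nonneg_left ((star b * c).norm_coe_le_norm l) (norm_nonneg _)
    · simpa using ha.1.norm.mul_const ‖star b * c‖
  · intro t l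
    have ht : (t : ℂ) * (starRingEnd ℂ) (t : ℂ) = 1 := by
      rw [Complex.mul_conj, Circle.normSq_coe]
      norm_num
    simp only [BoundedContinuousFunction.mul_apply, BoundedContinuousFunction.star_apply,
      ha.2 t l, hb.2 t l, hc.2 t l, Complex.star_def, map_mul]
    linear_combination ((t : ℂ) * a l * (starRingEnd ℂ) (b l) * c l) * ht

/-- The triple product `{a,b,c} = a·b̅·c` on `E`. -/
def jtripE (a b c : ET Λ) : ET Λ :=
  ⟨(a : Λ →ᵇ ℂ) * star (b : Λ →ᵇ ℂ) * (c : Λ →ᵇ ℂ), ET.trip_mem a.2 b.2 c.2⟩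

/-- `δ : E → E*` (continuous, conjugate-linear) is a ternary derivation, written out
pointwise on `E*`, where `{a,b,φ}(x) = {φ,b,a}(x) := φ({b,a,x})` and
`{a,φ,b}(x) := conj (φ({a,x,b}))`. -/
def IsTernaryDerE (δ : (ET Λ) →SL[starRingEnd ℂ] (StrongDual ℂ (ET Λ))) : Prop :=
  ∀ a b c x : ET Λ, δ (jtripE a b c) x
    = δ a (jtripE b c x) + conj (δ b (jtripE a x c)) + δ c (jtripE b a x)

/-- `δ : E → E*` is an inner ternary derivation: a finite sum of the maps
`a ↦ {b,φ,a} − {φ,b,a}` with `b ∈ E`, `φ ∈ E*`. -/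
def IsInnerTernaryDerE (δ : (ET Λ) →SL[starRingEnd ℂ] (StrongDual ℂ (ET Λ))) : Prop :=
  ∃ (n : ℕ) (b : Fin n → ET Λ) (φ : Fin n → StrongDual ℂ (ET Λ)),
    ∀ a x : ET Λ, δ a x
      = ∑ i, (conj (φ i (jtripE (b i) x a)) - φ i (jtripE (b i) a x))

instance etDerSNACG : SeminormedAddCommGroup ((ET Λ) →SL[starRingEnd ℂ] (StrongDual ℂ (ET Λ))) :=
  ContinuousLinearMap.toSeminormedAddCommGroup (𝕜 := ℂ) (𝕜₂ := ℂ) (E := ET Λ)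
    (F := StrongDual ℂ (ET Λ)) (σ₁₂ := starRingEnd ℂ)

instance etDerSub : Sub ((ET Λ) →SL[starRingEnd ℂ] (StrongDual ℂ (ET Λ))) :=
  ContinuousLinearMap.sub (R := ℂ) (R₂ := ℂ) (M := ET Λ)
    (M₂ := StrongDual ℂ (ET Λ)) (σ₁₂ := starRingEnd ℂ)

lemma etDer_le_opNorm (δ : (ET Λ) →SL[starRingEnd ℂ] (StrongDual ℂ (ET Λ))) (a : ET Λ) :
    ‖δ a‖ ≤ ‖δ‖ * ‖a‖ := by
  have h := ContinuousLinearMap.le_opNorm (𝕜 := ℂ) (𝕜₂ := ℂ) (E := ET Λ)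
    (F := StrongDual ℂ (ET Λ)) (σ₁₂ := starRingEnd ℂ)
  exact h δ a

lemma etDer_opNorm_le_bound (δ : (ET Λ) →SL[starRingEnd ℂ] (StrongDual ℂ (ET Λ))) {M : ℝ}
    (hM : 0 ≤ M) (h : ∀ a, ‖δ a‖ ≤ M * ‖a‖) : ‖δ‖ ≤ M := by
  have h' := ContinuousLinearMap.opNorm_le_bound (𝕜 := ℂ) (𝕜₂ := ℂ) (E := ET Λ)
    (F := StrongDual ℂ (ET Λ)) (σ₁₂ := starRingEnd ℂ)
  exact h' δ hM h

set_option linter.unusedSectionVars false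
set_option linter.unusedVariables false

namespace ATWA

open BoundedContinuousFunction Complex

variable {Λ : Type*} [TopologicalSpace Λ] [LocallyCompactSpace Λ] [T2Space Λ]
  [MulAction Circle Λ] [ContinuousSMul Circle Λ]

lemma et_ext {x y : ET Λ} (h : ∀ l, (x : Λ →ᵇ ℂ) l = (y : Λ →ᵇ ℂ) l) : x = y :=
  Subtype.ext (BoundedContinuousFunction.ext h)

lemma jtripE_apply (a b c : ET Λ) (l : Λ) :
    (jtripE a b c : Λ →ᵇ ℂ) l
      = (a : Λ →ᵇ ℂ) l * star ((b : Λ →ᵇ ℂ) l) * (c : Λ →ᵇ ℂ) l := rfl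

lemma et_add_apply (x y : ET Λ) (l : Λ) :
    ((x + y : ET Λ) : Λ →ᵇ ℂ) l = (x : Λ →ᵇ ℂ) l + (y : Λ →ᵇ ℂ) l := rfl

lemma et_smul_apply (c : ℂ) (x : ET Λ) (l : Λ) :
    ((c • x : ET Λ) : Λ →ᵇ ℂ) l = c * (x : Λ →ᵇ ℂ) l := rfl

lemma et_norm_apply_le (x : ET Λ) (l : Λ) : ‖(x : Λ →ᵇ ℂ) l‖ ≤ ‖x‖ :=
  (x : Λ →ᵇ ℂ).norm_coe_le_norm l

lemma et_norm_le {x : ET Λ} {C : ℝ} (hC : 0 ≤ C) (h : ∀ l, ‖(x : Λ →ᵇ ℂ) l‖ ≤ C) :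
    ‖x‖ ≤ C := by
  have : ‖(x : Λ →ᵇ ℂ)‖ ≤ C := (BoundedContinuousFunction.norm_le hC).mpr h
  exact this

/-- evaluation as additive monoid hom, to push sums through -/
def evET (l : Λ) : ET Λ →+ ℂ where
  toFun := fun x => (x : Λ →ᵇ ℂ) l
  map_zero' := rfl
  map_add' := fun _ _ => rfl

lemma et_sum_apply {ι : Type*} (s : Finset ι) (g : ι → ET Λ) (l : Λ) :
    ((∑ i ∈ s, g i : ET Λ) : Λ →ᵇ ℂ) l = ∑ i ∈ s, (g i : Λ →ᵇ ℂ) l :=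
  map_sum (evET l) g s

/-- invariance of a complex bounded continuous function -/
def invC (g : Λ →ᵇ ℂ) : Prop := ∀ (t : Circle) (l : Λ), g (t • l) = g l

/-- invariance of a real bounded continuous function -/
def invR (f : Λ →ᵇ ℝ) : Prop := ∀ (t : Circle) (l : Λ), f (t • l) = f l

/-- multiplication of an element of `ET` by an invariant complex function -/
def cmul (g : Λ →ᵇ ℂ) (hg : invC g) (x : ET Λ) : ET Λ :=
  ⟨g * (x : Λ →ᵇ ℂ), by
    constructor
    · refine squeeze_zero_norm (a := fun l => ‖g‖ * ‖(x : Λ →ᵇ ℂ) l‖) (fun l => ?_) ?_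
      · rw [BoundedContinuousFunction.mul_apply, norm_mul]
        exact mul_le_mul_of_nonneg_right (g.norm_coe_le_norm l) (norm_nonneg _)
      · simpa using ((x.2.1.norm).const_mul ‖g‖)
    · intro t l
      rw [BoundedContinuousFunction.mul_apply, BoundedContinuousFunction.mul_apply,
        hg t l, x.2.2 t l]
      ring⟩

lemma cmul_apply (g : Λ →ᵇ ℂ) (hg : invC g) (x : ET Λ) (l : Λ) :
    (cmul g hg x : Λ →ᵇ ℂ) l = g l * (x : Λ →ᵇ ℂ) l := rfl

/-- complexification of a real bounded continuous function -/
def cof (f : Λ →ᵇ ℝ) : Λ →ᵇ ℂ :=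
  BoundedContinuousFunction.ofNormedAddCommGroup (fun l => (f l : ℂ))
    (Complex.continuous_ofReal.comp f.continuous) ‖f‖
    (fun l => by simpa using f.norm_coe_le_norm l)

lemma cof_apply (f : Λ →ᵇ ℝ) (l : Λ) : cof f l = (f l : ℂ) := rfl

lemma cof_invC {f : Λ →ᵇ ℝ} (hf : invR f) : invC (cof f) := by
  intro t l; simp [cof_apply, hf t l]

/-- multiplication of an element of `ET` by an invariant real function -/
def rmul (f : Λ →ᵇ ℝ) (hf : invR f) (x : ET Λ) : ET Λ := cmul (cof f) (cof_invC hf) x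

lemma rmul_apply (f : Λ →ᵇ ℝ) (hf : invR f) (x : ET Λ) (l : Λ) :
    (rmul f hf x : Λ →ᵇ ℂ) l = (f l : ℂ) * (x : Λ →ᵇ ℂ) l := rfl

lemma rmul_norm_le (f : Λ →ᵇ ℝ) (hf : invR f) (x : ET Λ) {C : ℝ} (hC0 : 0 ≤ C)
    (hC : ∀ l, |f l| ≤ C) : ‖rmul f hf x‖ ≤ C * ‖x‖ := by
  refine et_norm_le (by positivity) (fun l => ?_)
  rw [rmul_apply, norm_mul]
  have h1 : ‖(f l : ℂ)‖ ≤ C := by simpa using hC l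
  exact mul_le_mul h1 (et_norm_apply_le x l) (norm_nonneg _) hC0

end ATWA
namespace ATWA

/-! ### cube roots and the orthogonality lemma -/

/-- pointwise cube root function on `ℂ` -/
def crootC (z : ℂ) : ℂ := ((‖z‖ ^ (-(2/3) : ℝ) : ℝ) : ℂ) * z

lemma crootC_zero : crootC 0 = 0 := by simp [crootC]

lemma crootC_zero_of (z : ℂ) (h : z = 0) : crootC z = 0 := by simp [crootC, h]

lemma norm_crootC (z : ℂ) : ‖crootC z‖ = ‖z‖ ^ ((1:ℝ)/3) := by
  rcases eq_or_ne z 0 with rfl | hz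
  · rw [crootC_zero]
    simp [Real.zero_rpow (by norm_num : ((1:ℝ)/3) ≠ 0)]
  · have ha : 0 < ‖z‖ := norm_pos_iff.mpr hz
    rw [crootC, norm_mul]
    rw [Complex.norm_real, Real.norm_eq_abs, abs_of_nonneg (Real.rpow_nonneg ha.le _)]
    nth_rewrite 2 [show ‖z‖ = ‖z‖ ^ (1:ℝ) from (Real.rpow_one _).symm]
    rw [← Real.rpow_add ha]
    norm_num

lemma crootC_trip (z : ℂ) : crootC z * star (crootC z) * crootC z = z := by
  rcases eq_or_ne z 0 with rfl | hz
  · simp [crootC]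
  · have ha : 0 < ‖z‖ := norm_pos_iff.mpr hz
    set r : ℝ := ‖z‖ ^ (-(2/3) : ℝ) with hr
    have hstar : star (crootC z) = (r : ℂ) * star z := by
      simp [crootC, Complex.star_def, map_mul, Complex.conj_ofReal]
      exact Or.inl rfl
    have h1 : crootC z * star (crootC z) * crootC z
        = ((r ^ 3 : ℝ) : ℂ) * (z * star z * z) := by
      rw [hstar]; unfold crootC; rw [← hr]; push_cast; ring
    have h2 : z * star z * z = ((‖z‖ ^ 2 : ℝ) : ℂ) * z := by
      rw [Complex.star_def, Complex.mul_conj, Complex.sq_norm]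
    have h3 : r ^ 3 * ‖z‖ ^ 2 = 1 := by
      rw [hr]
      rw [← Real.rpow_natCast (‖z‖ ^ (-(2/3) : ℝ)) 3,
        ← Real.rpow_natCast (‖z‖) 2,
        ← Real.rpow_mul ha.le, ← Real.rpow_add ha]
      norm_num
    rw [h1, h2]
    rw [show ((r^3 : ℝ) : ℂ) * (((‖z‖ ^ 2 : ℝ) : ℂ) * z)
        = ((r ^ 3 * ‖z‖ ^ 2 : ℝ) : ℂ) * z by push_cast; ring]
    rw [h3]
    simp

lemma continuous_crootC : Continuous crootC := by
  rw [continuous_iff_continuousAt]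
  intro z₀
  rcases eq_or_ne z₀ 0 with rfl | hz
  · have h0 : crootC 0 = 0 := crootC_zero
    unfold ContinuousAt
    rw [h0, tendsto_zero_iff_norm_tendsto_zero]
    simp only [norm_crootC]
    have h1 : Filter.Tendsto (fun z : ℂ => ‖z‖) (nhds 0) (nhds 0) := by
      simpa using (continuous_norm (E := ℂ)).tendsto 0
    have h2 : ContinuousAt (fun t : ℝ => t ^ ((1:ℝ)/3)) 0 :=
      Real.continuousAt_rpow_const 0 _ (Or.inr (by norm_num))
    have h3 := h2.tendsto.comp h1
    simpa [Function.comp_def, Real.zero_rpow (by norm_num : ((1:ℝ)/3) ≠ 0)] using h3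
  · have hc : ContinuousAt (fun z : ℂ => ((‖z‖ ^ (-(2/3) : ℝ) : ℝ) : ℂ)) z₀ := by
      apply Complex.continuous_ofReal.continuousAt.comp
      exact (Real.continuousAt_rpow_const _ _
        (Or.inl (norm_ne_zero_iff.mpr hz))).comp continuous_norm.continuousAt
    exact hc.mul continuousAt_id

lemma crootC_circle (t : Circle) (z : ℂ) : crootC ((t : ℂ) * z) = (t : ℂ) * crootC z := by
  unfold crootC
  rw [norm_mul]
  rw [Circle.norm_coe]
  ring_nf

variable {Λ : Type*} [TopologicalSpace Λ] [LocallyCompactSpace Λ] [T2Space Λ]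
  [MulAction Circle Λ] [ContinuousSMul Circle Λ]

/-- cube root inside `ET Λ` -/
def croot (a : ET Λ) : ET Λ :=
  ⟨BoundedContinuousFunction.ofNormedAddCommGroup (fun l => crootC ((a : Λ →ᵇ ℂ) l))
      (continuous_crootC.comp (a : Λ →ᵇ ℂ).continuous) (‖a‖ ^ ((1:ℝ)/3))
      (fun l => by
        rw [norm_crootC]
        refine Real.rpow_le_rpow (norm_nonneg _) ?_ (by norm_num)
        exact et_norm_apply_le a l),
   by
     constructor
     · rw [tendsto_zero_iff_norm_tendsto_zero]
       have heq : (fun l => ‖crootC ((a : Λ →ᵇ ℂ) l)‖)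
           = fun l => ‖(a : Λ →ᵇ ℂ) l‖ ^ ((1:ℝ)/3) := by
         funext l; exact norm_crootC _
       show Filter.Tendsto (fun l => ‖crootC ((a : Λ →ᵇ ℂ) l)‖) (Filter.cocompact Λ) (nhds 0)
       rw [heq]
       have h1 : Filter.Tendsto (fun l => ‖(a : Λ →ᵇ ℂ) l‖)
           (Filter.cocompact Λ) (nhds 0) := by
         simpa using a.2.1.norm
       have h2 : ContinuousAt (fun t : ℝ => t ^ ((1:ℝ)/3)) 0 :=
         Real.continuousAt_rpow_const 0 _ (Or.inr (by norm_num))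
       have h3 := h2.tendsto.comp h1
       simpa [Function.comp_def, Real.zero_rpow (by norm_num : ((1:ℝ)/3) ≠ 0)] using h3
     · intro t l
       show crootC ((a : Λ →ᵇ ℂ) (t • l)) = (t : ℂ) * crootC ((a : Λ →ᵇ ℂ) l)
       rw [a.2.2 t l, crootC_circle]⟩

lemma croot_apply (a : ET Λ) (l : Λ) :
    ((croot a : ET Λ) : Λ →ᵇ ℂ) l = crootC ((a : Λ →ᵇ ℂ) l) := rfl

lemma et_zero_apply (l : Λ) : ((0 : ET Λ) : Λ →ᵇ ℂ) l = 0 := rfl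

/-- Claim 1: a ternary derivation kills pairs with pointwise zero products. -/
lemma der_zero_of_mul_zero (δ : (ET Λ) →SL[starRingEnd ℂ] (StrongDual ℂ (ET Λ)))
    (hδ : IsTernaryDerE δ) (a x : ET Λ)
    (h : ∀ l, (a : Λ →ᵇ ℂ) l * (x : Λ →ᵇ ℂ) l = 0) : δ a x = 0 := by
  set u := croot a with hu
  have h1 : jtripE u u u = a := by
    refine et_ext (fun l => ?_)
    rw [jtripE_apply]
    show crootC ((a : Λ →ᵇ ℂ) l) * star (crootC ((a : Λ →ᵇ ℂ) l))
        * crootC ((a : Λ →ᵇ ℂ) l) = _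
    exact crootC_trip _
  have key : ∀ l, (a : Λ →ᵇ ℂ) l ≠ 0 → (x : Λ →ᵇ ℂ) l = 0 := by
    intro l hl
    rcases mul_eq_zero.mp (h l) with h' | h'
    · exact absurd h' hl
    · exact h'
  have h2 : jtripE u u x = 0 := by
    refine et_ext (fun l => ?_)
    rw [jtripE_apply, et_zero_apply]
    rcases eq_or_ne ((a : Λ →ᵇ ℂ) l) 0 with hl | hl
    · rw [croot_apply, crootC_zero_of _ hl]; ring
    · rw [key l hl]; ring
  have h3 : jtripE u x u = 0 := by
    refine et_ext (fun l => ?_)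
    rw [jtripE_apply, et_zero_apply]
    rcases eq_or_ne ((a : Λ →ᵇ ℂ) l) 0 with hl | hl
    · rw [croot_apply, crootC_zero_of _ hl]; ring
    · rw [key l hl]; simp
  have hid := hδ u u u x
  rw [h1, h2, h3] at hid
  simpa using hid

end ATWA
namespace ATWA

/-! ### helpers for the moving lemma -/

lemma eq_zero_of_forall_norm_le {w : ℂ} {C : ℝ} (hC : 0 ≤ C)
    (h : ∀ e : ℝ, 0 < e → ‖w‖ ≤ e * C) : w = 0 := by
  by_contra hw
  have hpos : 0 < ‖w‖ := norm_pos_iff.mpr hw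
  have hh := h (‖w‖ / (2 * (C + 1))) (by positivity)
  have hC1 : 0 < C + 1 := by linarith
  rw [div_mul_eq_mul_div, mul_comm] at hh
  have : C * ‖w‖ / (2 * (C + 1)) < ‖w‖ := by
    rw [div_lt_iff₀ (by positivity)]
    nlinarith
  linarith

lemma norm_sum_le_of_pairwise {ι : Type*} (s : Finset ι) (g : ι → ℂ) (C : ℝ)
    (hC : 0 ≤ C) (hb : ∀ j ∈ s, ‖g j‖ ≤ C)
    (hp : ∀ j ∈ s, ∀ k ∈ s, j ≠ k → g j = 0 ∨ g k = 0) :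
    ‖∑ j ∈ s, g j‖ ≤ C := by
  classical
  by_cases h : ∀ j ∈ s, g j = 0
  · rw [Finset.sum_eq_zero h]; simpa
  · push_neg at h
    obtain ⟨j₀, hj₀s, hj₀⟩ := h
    rw [Finset.sum_eq_single_of_mem j₀ hj₀s (fun k hk hkne => ?_)]
    · exact hb j₀ hj₀s
    · rcases hp k hk j₀ hj₀s hkne with h' | h'
      · exact h'
      · exact absurd h' hj₀

lemma class_far {j k : ℤ} (hj : j % 5 = k % 5) (hne : j ≠ k) : 5 ≤ |j - k| := by
  have h5 : (5:ℤ) ∣ (j - k) := by omega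
  have hne' : j - k ≠ 0 := sub_ne_zero.mpr hne
  exact Int.le_of_dvd (abs_pos.mpr hne') ((dvd_abs 5 (j - k)).mpr h5)

section Tent

variable (e : ℝ)

def tentρ (j : ℤ) (t : ℝ) : ℝ := max 0 (1 - |t/e - j|)
def tentτ (j : ℤ) (t : ℝ) : ℝ := max 0 (min 1 (2 - |t/e - j|))
def tentσ (j : ℤ) (t : ℝ) : ℝ := (t - j*e) * tentτ e j t

lemma tentρ_nonneg (j : ℤ) (t : ℝ) : 0 ≤ tentρ e j t := le_max_left _ _

lemma tentρ_le_one (j : ℤ) (t : ℝ) : tentρ e j t ≤ 1 := by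
  unfold tentρ
  have : (1 : ℝ) - |t/e - j| ≤ 1 := by
    have := abs_nonneg (t/e - (j:ℝ)); linarith
  exact max_le (by norm_num) this

lemma tentρ_abs_le (j : ℤ) (t : ℝ) : |tentρ e j t| ≤ 1 := by
  rw [abs_of_nonneg (tentρ_nonneg e j t)]; exact tentρ_le_one e j t

lemma tentρ_ne_zero {j : ℤ} {t : ℝ} (h : tentρ e j t ≠ 0) : |t/e - j| < 1 := by
  by_contra h'
  push_neg at h'
  apply h
  unfold tentρ
  rw [max_eq_left (by linarith)]

lemma tentτ_nonneg (j : ℤ) (t : ℝ) : 0 ≤ tentτ e j t := le_max_left _ _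

lemma tentτ_le_one (j : ℤ) (t : ℝ) : tentτ e j t ≤ 1 :=
  max_le (by norm_num) (min_le_left _ _)

lemma tentσ_ne_zero {j : ℤ} {t : ℝ} (h : tentσ e j t ≠ 0) : |t/e - j| < 2 := by
  by_contra h'
  push_neg at h'
  apply h
  unfold tentσ tentτ
  rw [min_eq_right (by linarith), max_eq_left (by linarith), mul_zero]

lemma tentσ_eq {j : ℤ} {t : ℝ} (h : |t/e - j| ≤ 1) : tentσ e j t = t - j*e := by
  unfold tentσ tentτ
  rw [min_eq_left (by linarith), max_eq_right (by norm_num), mul_one]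

lemma tentσ_abs_le (he : 0 < e) (j : ℤ) (t : ℝ) : |tentσ e j t| ≤ 2 * e := by
  by_cases h : |t/e - j| < 2
  · unfold tentσ
    rw [abs_mul]
    have h1 : |t - j*e| ≤ 2 * e := by
      have : t - j*e = (t/e - j) * e := by field_simp
      rw [this, abs_mul, abs_of_pos he]
      exact mul_le_mul_of_nonneg_right h.le he.le
    have h2 : |tentτ e j t| ≤ 1 := by
      rw [abs_of_nonneg (tentτ_nonneg e j t)]; exact tentτ_le_one e j t
    calc |t - j*e| * |tentτ e j t| ≤ (2*e) * 1 :=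
          mul_le_mul h1 h2 (abs_nonneg _) (by positivity)
      _ = 2 * e := by ring
  · push_neg at h
    have : tentσ e j t = 0 := by
      unfold tentσ tentτ
      rw [min_eq_right (by linarith), max_eq_left (by linarith), mul_zero]
    rw [this]; simp; positivity

lemma sigma_rho_zero (he : 0 < e) {j k : ℤ} (h : 3 ≤ |j - k|) (t : ℝ) :
    tentσ e j t * tentρ e k t = 0 := by
  by_contra h'
  have hσ : tentσ e j t ≠ 0 := left_ne_zero_of_mul h'
  have hρ : tentρ e k t ≠ 0 := right_ne_zero_of_mul h'
  have h1 := tentσ_ne_zero e hσ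
  have h2 := tentρ_ne_zero e hρ
  have h3 : |(j:ℝ) - k| < 3 := by
    calc |(j:ℝ) - k| = |(j - t/e) + (t/e - k)| := by ring_nf
      _ ≤ |(j:ℝ) - t/e| + |t/e - k| := abs_add_le _ _
      _ = |t/e - j| + |t/e - k| := by rw [abs_sub_comm]
      _ < 3 := by linarith
  have h4 : |j - k| < 3 := by exact_mod_cast (by push_cast at h3 ⊢; exact h3 : |((j - k : ℤ) : ℝ)| < 3)
  omega

lemma sigma_sigma_zero (he : 0 < e) {j k : ℤ} (h : 4 ≤ |j - k|) (t : ℝ) :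
    tentσ e j t * tentσ e k t = 0 := by
  by_contra h'
  have hσ : tentσ e j t ≠ 0 := left_ne_zero_of_mul h'
  have hρ : tentσ e k t ≠ 0 := right_ne_zero_of_mul h'
  have h1 := tentσ_ne_zero e hσ
  have h2 := tentσ_ne_zero e hρ
  have h3 : |(j:ℝ) - k| < 4 := by
    calc |(j:ℝ) - k| = |(j - t/e) + (t/e - k)| := by ring_nf
      _ ≤ |(j:ℝ) - t/e| + |t/e - k| := abs_add_le _ _
      _ = |t/e - j| + |t/e - k| := by rw [abs_sub_comm]
      _ < 4 := by linarith
  have h4 : |j - k| < 4 := by exact_mod_cast (by push_cast at h3 ⊢; exact h3 : |((j - k : ℤ) : ℝ)| < 4)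
  omega

lemma rho_rho_zero (he : 0 < e) {j k : ℤ} (h : 2 ≤ |j - k|) (t : ℝ) :
    tentρ e j t * tentρ e k t = 0 := by
  by_contra h'
  have hσ : tentρ e j t ≠ 0 := left_ne_zero_of_mul h'
  have hρ : tentρ e k t ≠ 0 := right_ne_zero_of_mul h'
  have h1 := tentρ_ne_zero e hσ
  have h2 := tentρ_ne_zero e hρ
  have h3 : |(j:ℝ) - k| < 2 := by
    calc |(j:ℝ) - k| = |(j - t/e) + (t/e - k)| := by ring_nf
      _ ≤ |(j:ℝ) - t/e| + |t/e - k| := abs_add_le _ _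
      _ = |t/e - j| + |t/e - k| := by rw [abs_sub_comm]
      _ < 2 := by linarith
  have h4 : |j - k| < 2 := by exact_mod_cast (by push_cast at h3 ⊢; exact h3 : |((j - k : ℤ) : ℝ)| < 2)
  omega

lemma continuous_tentρ (j : ℤ) : Continuous (tentρ e j) := by
  unfold tentρ
  exact continuous_const.max
    (continuous_const.sub (((continuous_id.div_const e).sub continuous_const).abs))

lemma continuous_tentσ (j : ℤ) : Continuous (tentσ e j) := by
  unfold tentσ tentτ
  exact (continuous_id.sub continuous_const).mul
    (continuous_const.max (continuous_const.min
      (continuous_const.sub (((continuous_id.div_const e).sub continuous_const).abs))))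

lemma tent_sum (he : 0 < e) (M : ℤ) (t : ℝ) (h1 : (-M : ℝ) ≤ t/e) (h2 : t/e ≤ (M:ℝ) - 1) :
    ∑ j ∈ Finset.Icc (-M) M, tentρ e j t = 1 := by
  classical
  set s : ℝ := t / e with hs
  set j₀ : ℤ := ⌊s⌋ with hj₀
  have hfl : (j₀ : ℝ) ≤ s := Int.floor_le s
  have hfu : s < (j₀ : ℝ) + 1 := Int.lt_floor_add_one s
  have hj₀l : -M ≤ j₀ := Int.le_floor.mpr (by exact_mod_cast h1)
  have hj₀u : j₀ + 1 ≤ M := by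
    have : j₀ ≤ M - 1 := by
      have h3 : s ≤ ((M - 1 : ℤ) : ℝ) := by push_cast; linarith
      calc j₀ = ⌊s⌋ := hj₀
        _ ≤ ⌊((M - 1 : ℤ) : ℝ)⌋ := Int.floor_le_floor h3
        _ = M - 1 := Int.floor_intCast _
    omega
  have hsub : ({j₀, j₀ + 1} : Finset ℤ) ⊆ Finset.Icc (-M) M := by
    intro k hk
    rw [Finset.mem_insert, Finset.mem_singleton] at hk
    rw [Finset.mem_Icc]
    rcases hk with rfl | rfl <;> omega
  have hzero : ∀ j ∈ Finset.Icc (-M) M, j ∉ ({j₀, j₀ + 1} : Finset ℤ) → tentρ e j t = 0 := by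
    intro j _ hj
    rw [Finset.mem_insert, Finset.mem_singleton] at hj
    push_neg at hj
    have habs : 1 ≤ |s - j| := by
      rcases lt_or_ge j j₀ with h' | h'
      · have : (j : ℝ) ≤ (j₀ : ℝ) - 1 := by exact_mod_cast (by omega : j ≤ j₀ - 1)
        rw [abs_of_nonneg (by linarith)]
        linarith
      · have hj2 : j₀ + 2 ≤ j := by omega
        have : (j₀ : ℝ) + 2 ≤ (j : ℝ) := by exact_mod_cast hj2
        rw [abs_of_nonpos (by linarith)]
        linarith
    unfold tentρ
    rw [← hs, max_eq_left (by linarith)]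
  rw [← Finset.sum_subset hsub hzero]
  rw [Finset.sum_pair (by omega : j₀ ≠ j₀ + 1)]
  have v1 : tentρ e j₀ t = 1 - (s - j₀) := by
    unfold tentρ
    rw [← hs, abs_of_nonneg (by linarith), max_eq_right (by linarith)]
  have v2 : tentρ e (j₀ + 1) t = 1 - ((j₀ : ℝ) + 1 - s) := by
    unfold tentρ
    rw [← hs]
    rw [show |s - ((j₀ + 1 : ℤ) : ℝ)| = (j₀:ℝ) + 1 - s by
      push_cast
      rw [abs_of_nonpos (by linarith)]; ring]
    rw [max_eq_right (by linarith)]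
  rw [v1, v2]; ring

end Tent

end ATWA
set_option maxHeartbeats 1000000

namespace ATWA

variable {Λ : Type*} [TopologicalSpace Λ] [LocallyCompactSpace Λ] [T2Space Λ]
  [MulAction Circle Λ] [ContinuousSMul Circle Λ]

variable (δ : (ET Λ) →SL[starRingEnd ℂ] (StrongDual ℂ (ET Λ)))

lemma Gbound (a x : ET Λ) : ‖δ a x‖ ≤ ‖δ‖ * ‖a‖ * ‖x‖ := by
  calc ‖δ a x‖ ≤ ‖δ a‖ * ‖x‖ := (δ a).le_opNorm x
    _ ≤ ‖δ‖ * ‖a‖ * ‖x‖ := mul_le_mul_of_nonneg_right (etDer_le_opNorm δ a) (norm_nonneg _)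

lemma rmul_sum {ι : Type*} (f : Λ →ᵇ ℝ) (hf : invR f) (s : Finset ι) (g : ι → ET Λ) :
    rmul f hf (∑ i ∈ s, g i) = ∑ i ∈ s, rmul f hf (g i) := by
  refine et_ext (fun l => ?_)
  rw [rmul_apply, et_sum_apply, et_sum_apply, Finset.mul_sum]
  exact Finset.sum_congr rfl (fun i _ => (rmul_apply f hf (g i) l).symm)

/-- The moving lemma: an invariant real multiplier can be moved across the two
arguments of a ternary derivation into the dual. -/
lemma moveR (hδ : IsTernaryDerE δ) (f : Λ →ᵇ ℝ) (hf : invR f) (a x : ET Λ) :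
    δ (rmul f hf a) x = δ a (rmul f hf x) := by
  classical
  rw [← sub_eq_zero]
  set K := ‖δ‖ * ‖a‖ * ‖x‖ with hK
  refine eq_zero_of_forall_norm_le (C := 20 * K) (by positivity) (fun e he => ?_)
  set ρB : ℤ → (Λ →ᵇ ℝ) := fun j => BoundedContinuousFunction.ofNormedAddCommGroup
      (fun l => tentρ e j (f l)) ((continuous_tentρ e j).comp f.continuous) 1
      (fun l => by simpa [Real.norm_eq_abs] using tentρ_abs_le e j (f l)) with hρB
  set σB : ℤ → (Λ →ᵇ ℝ) := fun j => BoundedContinuousFunction.ofNormedAddCommGroup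
      (fun l => tentσ e j (f l)) ((continuous_tentσ e j).comp f.continuous) (2*e)
      (fun l => by simpa [Real.norm_eq_abs] using tentσ_abs_le e he j (f l)) with hσB
  have hρBapp : ∀ (j : ℤ) (l : Λ), ρB j l = tentρ e j (f l) := fun j l => by rw [hρB]; rfl
  have hσBapp : ∀ (j : ℤ) (l : Λ), σB j l = tentσ e j (f l) := fun j l => by rw [hσB]; rfl
  have hρinv : ∀ j : ℤ, invR (ρB j) := fun j t l => by
    rw [hρBapp, hρBapp, hf t l]
  have hσinv : ∀ j : ℤ, invR (σB j) := fun j t l => by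
    rw [hσBapp, hσBapp, hf t l]
  set X : ℤ → ET Λ := fun j => rmul (ρB j) (hρinv j) x with hX
  set Y : ℤ → ET Λ := fun j => rmul (σB j) (hσinv j) a with hY
  set W : ℤ → ET Λ := fun j => rmul (σB j) (hσinv j) (X j) with hW
  have hXapp : ∀ (j : ℤ) (l : Λ),
      ((X j : ET Λ) : Λ →ᵇ ℂ) l = ((tentρ e j (f l) : ℝ) : ℂ) * (x : Λ →ᵇ ℂ) l := by
    intro j l
    rw [hX]
    show ((ρB j) l : ℂ) * (x : Λ →ᵇ ℂ) l = _
    rw [hρBapp]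
  have hYapp : ∀ (j : ℤ) (l : Λ),
      ((Y j : ET Λ) : Λ →ᵇ ℂ) l = ((tentσ e j (f l) : ℝ) : ℂ) * (a : Λ →ᵇ ℂ) l := by
    intro j l
    rw [hY]
    show ((σB j) l : ℂ) * (a : Λ →ᵇ ℂ) l = _
    rw [hσBapp]
  have hWapp : ∀ (j : ℤ) (l : Λ),
      ((W j : ET Λ) : Λ →ᵇ ℂ) l
        = ((tentσ e j (f l) : ℝ) : ℂ) * (((tentρ e j (f l) : ℝ) : ℂ) * (x : Λ →ᵇ ℂ) l) := by
    intro j l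
    rw [hW]
    show ((σB j) l : ℂ) * ((X j : ET Λ) : Λ →ᵇ ℂ) l = _
    rw [hσBapp, hXapp]
  set M : ℤ := ⌈‖f‖ / e⌉ + 1 with hM
  set I : Finset ℤ := Finset.Icc (-M) M with hI
  have hran : ∀ l, (-M : ℝ) ≤ f l / e ∧ f l / e ≤ (M : ℝ) - 1 := by
    intro l
    have h1 : |f l| ≤ ‖f‖ := by simpa [Real.norm_eq_abs] using f.norm_coe_le_norm l
    have h2 : ‖f‖ / e ≤ (⌈‖f‖ / e⌉ : ℝ) := Int.le_ceil _
    have h3 : -(‖f‖) ≤ f l := (abs_le.mp h1).1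
    have h4 : f l ≤ ‖f‖ := (abs_le.mp h1).2
    have h5 : f l / e ≤ ‖f‖ / e := by gcongr
    have h6 : -(‖f‖) / e ≤ f l / e := by gcongr
    have hMr : (M : ℝ) = (⌈‖f‖ / e⌉ : ℝ) + 1 := by rw [hM]; push_cast; ring
    constructor
    · rw [hMr]
      have : -(‖f‖) / e = -(‖f‖ / e) := by ring
      rw [this] at h6
      linarith
    · rw [hMr]; linarith
  have hxsum : x = ∑ j ∈ I, X j := by
    refine et_ext (fun l => ?_)
    rw [et_sum_apply]
    rw [Finset.sum_congr rfl (fun j _ => hXapp j l), ← Finset.sum_mul, ← Complex.ofReal_sum,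
      tent_sum e he M (f l) (hran l).1 (hran l).2]
    simp
  -- per-index identity
  have key : ∀ j : ℤ, δ (rmul f hf a) (X j) - δ a (rmul f hf (X j))
      = δ (Y j) (X j) - δ a (W j) := by
    intro j
    set mB : Λ →ᵇ ℝ := f - BoundedContinuousFunction.const Λ ((j : ℝ) * e) - σB j with hmB
    have hmapp : ∀ l, mB l = f l - (j : ℝ) * e - tentσ e j (f l) := by
      intro l
      rw [hmB]
      simp [hσBapp]
    have hminv : invR mB := fun t l => by rw [hmapp, hmapp, hf t l]
    have e1 : rmul f hf a = (((j : ℝ) * e : ℝ) : ℂ) • a + Y j + rmul mB hminv a := by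
      refine et_ext (fun l => ?_)
      rw [rmul_apply, et_add_apply, et_add_apply, et_smul_apply, hYapp, rmul_apply, hmapp]
      push_cast
      ring
    have hz : δ (rmul mB hminv a) (X j) = 0 := by
      refine der_zero_of_mul_zero δ hδ _ _ (fun l => ?_)
      rw [rmul_apply, hXapp, hmapp]
      by_cases hl : tentρ e j (f l) = 0
      · rw [hl]; push_cast; ring
      · rw [tentσ_eq e (le_of_lt (tentρ_ne_zero e hl))]
        push_cast; ring
    have e2 : rmul f hf (X j) = (((j : ℝ) * e : ℝ) : ℂ) • (X j) + W j := by
      refine et_ext (fun l => ?_)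
      rw [rmul_apply, et_add_apply, et_smul_apply, hWapp, hXapp]
      by_cases hl : tentρ e j (f l) = 0
      · rw [hl]; push_cast; ring
      · rw [tentσ_eq e (le_of_lt (tentρ_ne_zero e hl))]
        push_cast; ring
    rw [e1, e2]
    rw [map_add, map_add, ContinuousLinearMap.add_apply, ContinuousLinearMap.add_apply]
    rw [map_smulₛₗ, ContinuousLinearMap.smul_apply, Complex.conj_ofReal]
    rw [map_add (δ a), map_smul (δ a)]
    rw [hz]
    simp only [smul_eq_mul]
    ring
  have hD : δ (rmul f hf a) x - δ a (rmul f hf x)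
      = ∑ j ∈ I, (δ (Y j) (X j) - δ a (W j)) := by
    conv_lhs => rw [hxsum]
    rw [rmul_sum, map_sum (δ (rmul f hf a)), map_sum (δ a)]
    rw [← Finset.sum_sub_distrib]
    exact Finset.sum_congr rfl (fun j _ => key j)
  rw [hD]
  have hmem : ∀ j ∈ I, j % 5 ∈ Finset.Icc (0:ℤ) 4 := by
    intro j _
    rw [Finset.mem_Icc]
    have h1 := Int.emod_nonneg j (show (5:ℤ) ≠ 0 by norm_num)
    have h2 := Int.emod_lt_of_pos j (show (0:ℤ) < 5 by norm_num)
    omega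
  rw [← Finset.sum_fiberwise_of_maps_to hmem (fun j => δ (Y j) (X j) - δ a (W j))]
  have hclass : ∀ r ∈ Finset.Icc (0:ℤ) 4,
      ‖∑ j ∈ I.filter (fun j => j % 5 = r), (δ (Y j) (X j) - δ a (W j))‖ ≤ 4 * e * K := by
    intro r _
    set cl := I.filter (fun j => j % 5 = r) with hcl
    have hfar : ∀ j ∈ cl, ∀ k ∈ cl, j ≠ k → 5 ≤ |j - k| := by
      intro j hj k hk hne
      rw [hcl, Finset.mem_filter] at hj hk
      exact class_far (hj.2.trans hk.2.symm) hne
    have hcross : ∀ j ∈ cl, ∀ k ∈ cl, j ≠ k → δ (Y j) (X k) = 0 := by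
      intro j hj k hk hne
      refine der_zero_of_mul_zero δ hδ _ _ (fun l => ?_)
      rw [hYapp, hXapp]
      have h5 := hfar j hj k hk hne
      have hzz := sigma_rho_zero e he (by omega : 3 ≤ |j - k|) (f l)
      calc ((tentσ e j (f l) : ℝ) : ℂ) * (a : Λ →ᵇ ℂ) l
            * (((tentρ e k (f l) : ℝ) : ℂ) * (x : Λ →ᵇ ℂ) l)
          = ((tentσ e j (f l) * tentρ e k (f l) : ℝ) : ℂ)
            * ((a : Λ →ᵇ ℂ) l * (x : Λ →ᵇ ℂ) l) := by push_cast; ring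
        _ = 0 := by rw [hzz]; simp
    have hT1eq : ∑ j ∈ cl, δ (Y j) (X j) = δ (∑ j ∈ cl, Y j) (∑ k ∈ cl, X k) := by
      symm
      rw [map_sum δ _ cl, ContinuousLinearMap.sum_apply]
      refine Finset.sum_congr rfl (fun j hj => ?_)
      rw [map_sum (δ (Y j)) _ cl]
      exact Finset.sum_eq_single_of_mem j hj
        (fun k hk hkj => hcross j hj k hk (Ne.symm hkj))
    have hYnorm : ‖∑ j ∈ cl, Y j‖ ≤ 2*e*‖a‖ := by
      refine et_norm_le (by positivity) (fun l => ?_)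
      rw [et_sum_apply]
      refine norm_sum_le_of_pairwise cl _ _ (by positivity) (fun j hj => ?_)
        (fun j hj k hk hne => ?_)
      · rw [hYapp, norm_mul]
        have h1 : ‖((tentσ e j (f l) : ℝ) : ℂ)‖ ≤ 2*e := by
          rw [Complex.norm_real, Real.norm_eq_abs]
          exact tentσ_abs_le e he j (f l)
        exact mul_le_mul h1 (et_norm_apply_le a l) (norm_nonneg _) (by positivity)
      · have h5 := hfar j hj k hk hne
        have hzz := sigma_sigma_zero e he (by omega : 4 ≤ |j - k|) (f l)
        rcases mul_eq_zero.mp hzz with h' | h'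
        · left; rw [hYapp, h']; simp
        · right; rw [hYapp, h']; simp
    have hXnorm : ‖∑ k ∈ cl, X k‖ ≤ 1*‖x‖ := by
      refine et_norm_le (by positivity) (fun l => ?_)
      rw [et_sum_apply]
      refine norm_sum_le_of_pairwise cl _ _ (by positivity) (fun j hj => ?_)
        (fun j hj k hk hne => ?_)
      · rw [hXapp, norm_mul]
        have h1 : ‖((tentρ e j (f l) : ℝ) : ℂ)‖ ≤ 1 := by
          rw [Complex.norm_real, Real.norm_eq_abs]
          exact tentρ_abs_le e j (f l)
        exact mul_le_mul h1 (et_norm_apply_le x l) (norm_nonneg _) (by positivity)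
      · have h5 := hfar j hj k hk hne
        have hzz := rho_rho_zero e he (by omega : 2 ≤ |j - k|) (f l)
        rcases mul_eq_zero.mp hzz with h' | h'
        · left; rw [hXapp, h']; simp
        · right; rw [hXapp, h']; simp
    have hT1 : ‖∑ j ∈ cl, δ (Y j) (X j)‖ ≤ 2*e*K := by
      rw [hT1eq]
      calc ‖δ (∑ j ∈ cl, Y j) (∑ k ∈ cl, X k)‖
          ≤ ‖δ‖ * ‖∑ j ∈ cl, Y j‖ * ‖∑ k ∈ cl, X k‖ := Gbound δ _ _
        _ ≤ ‖δ‖ * (2*e*‖a‖) * (1*‖x‖) := by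
            have := norm_nonneg (∑ j ∈ cl, Y j)
            gcongr
        _ = 2*e*K := by rw [hK]; ring
    have hWnorm : ‖∑ j ∈ cl, W j‖ ≤ 2*e*‖x‖ := by
      refine et_norm_le (by positivity) (fun l => ?_)
      rw [et_sum_apply]
      refine norm_sum_le_of_pairwise cl _ _ (by positivity) (fun j hj => ?_)
        (fun j hj k hk hne => ?_)
      · rw [hWapp]
        have h1 : ‖((tentσ e j (f l) : ℝ) : ℂ)‖ ≤ 2*e := by
          rw [Complex.norm_real, Real.norm_eq_abs]
          exact tentσ_abs_le e he j (f l)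
        have h2 : ‖((tentρ e j (f l) : ℝ) : ℂ) * (x : Λ →ᵇ ℂ) l‖ ≤ 1 * ‖x‖ := by
          rw [norm_mul]
          have : ‖((tentρ e j (f l) : ℝ) : ℂ)‖ ≤ 1 := by
            rw [Complex.norm_real, Real.norm_eq_abs]
            exact tentρ_abs_le e j (f l)
          exact mul_le_mul this (et_norm_apply_le x l) (norm_nonneg _) (by positivity)
        calc ‖((tentσ e j (f l) : ℝ) : ℂ) * (((tentρ e j (f l) : ℝ) : ℂ) * (x : Λ →ᵇ ℂ) l)‖
            = ‖((tentσ e j (f l) : ℝ) : ℂ)‖ * ‖((tentρ e j (f l) : ℝ) : ℂ) * (x : Λ →ᵇ ℂ) l‖ :=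
              norm_mul _ _
          _ ≤ (2*e) * (1*‖x‖) := mul_le_mul h1 h2 (norm_nonneg _) (by positivity)
          _ = 2*e*‖x‖ := by ring
      · have h5 := hfar j hj k hk hne
        have hzz := rho_rho_zero e he (by omega : 2 ≤ |j - k|) (f l)
        rcases mul_eq_zero.mp hzz with h' | h'
        · left; rw [hWapp, h']; simp
        · right; rw [hWapp, h']; simp
    have hT2 : ‖∑ j ∈ cl, δ a (W j)‖ ≤ 2*e*K := by
      rw [← map_sum (δ a) _ cl]
      calc ‖δ a (∑ j ∈ cl, W j)‖ ≤ ‖δ‖ * ‖a‖ * ‖∑ j ∈ cl, W j‖ := Gbound δ _ _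
        _ ≤ ‖δ‖ * ‖a‖ * (2*e*‖x‖) := by gcongr
        _ = 2*e*K := by rw [hK]; ring
    calc ‖∑ j ∈ cl, (δ (Y j) (X j) - δ a (W j))‖
        = ‖(∑ j ∈ cl, δ (Y j) (X j)) - ∑ j ∈ cl, δ a (W j)‖ := by
          rw [Finset.sum_sub_distrib]
      _ ≤ ‖∑ j ∈ cl, δ (Y j) (X j)‖ + ‖∑ j ∈ cl, δ a (W j)‖ := norm_sub_le _ _
      _ ≤ 2*e*K + 2*e*K := add_le_add hT1 hT2
      _ = 4*e*K := by ring
  calc ‖∑ r ∈ Finset.Icc (0:ℤ) 4, ∑ j ∈ I.filter (fun j => j % 5 = r),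
          (δ (Y j) (X j) - δ a (W j))‖
      ≤ ∑ r ∈ Finset.Icc (0:ℤ) 4, ‖∑ j ∈ I.filter (fun j => j % 5 = r),
          (δ (Y j) (X j) - δ a (W j))‖ := norm_sum_le _ _
    _ ≤ ∑ r ∈ Finset.Icc (0:ℤ) 4, 4*e*K := Finset.sum_le_sum hclass
    _ = 5 * (4*e*K) := by
        rw [Finset.sum_const, nsmul_eq_mul]
        norm_num [Int.card_Icc]
        left
        simp
    _ = e * (20*K) := by ring

end ATWA
namespace ATWA

lemma conj_eq_re_sub_im (z : ℂ) :
    (starRingEnd ℂ) z = (z.re : ℂ) - (z.im : ℂ) * Complex.I := by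
  apply Complex.ext <;> simp

variable {Λ : Type*} [TopologicalSpace Λ] [LocallyCompactSpace Λ] [T2Space Λ]
  [MulAction Circle Λ] [ContinuousSMul Circle Λ]

/-- real part of a complex BCF -/
def reB (g : Λ →ᵇ ℂ) : Λ →ᵇ ℝ :=
  BoundedContinuousFunction.ofNormedAddCommGroup (fun l => (g l).re)
    (Complex.continuous_re.comp g.continuous) ‖g‖
    (fun l => by
      rw [Real.norm_eq_abs]
      exact (Complex.abs_re_le_norm (g l)).trans
        (by simpa using g.norm_coe_le_norm l))

/-- imaginary part of a complex BCF -/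
def imB (g : Λ →ᵇ ℂ) : Λ →ᵇ ℝ :=
  BoundedContinuousFunction.ofNormedAddCommGroup (fun l => (g l).im)
    (Complex.continuous_im.comp g.continuous) ‖g‖
    (fun l => by
      rw [Real.norm_eq_abs]
      exact (Complex.abs_im_le_norm (g l)).trans
        (by simpa using g.norm_coe_le_norm l))

lemma reB_apply (g : Λ →ᵇ ℂ) (l : Λ) : reB g l = (g l).re := rfl
lemma imB_apply (g : Λ →ᵇ ℂ) (l : Λ) : imB g l = (g l).im := rfl

lemma reB_inv {g : Λ →ᵇ ℂ} (hg : invC g) : invR (reB g) := fun t l => by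
  rw [reB_apply, reB_apply, hg t l]

lemma imB_inv {g : Λ →ᵇ ℂ} (hg : invC g) : invR (imB g) := fun t l => by
  rw [imB_apply, imB_apply, hg t l]

lemma invC_star {g : Λ →ᵇ ℂ} (hg : invC g) : invC (star g) := fun t l => by
  rw [BoundedContinuousFunction.star_apply, BoundedContinuousFunction.star_apply, hg t l]

variable (δ : (ET Λ) →SL[starRingEnd ℂ] (StrongDual ℂ (ET Λ)))

/-- the moving lemma for invariant complex multipliers -/
lemma moveC (hδ : IsTernaryDerE δ) (g : Λ →ᵇ ℂ) (hg : invC g) (a x : ET Λ) :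
    δ (cmul g hg a) x = δ a (cmul (star g) (invC_star hg) x) := by
  have hd1 : cmul g hg a
      = rmul (reB g) (reB_inv hg) a + Complex.I • rmul (imB g) (imB_inv hg) a := by
    refine et_ext (fun l => ?_)
    rw [cmul_apply, et_add_apply, et_smul_apply, rmul_apply, rmul_apply, reB_apply, imB_apply]
    have := Complex.re_add_im (g l)
    linear_combination (a : Λ →ᵇ ℂ) l * this.symm
  have hd2 : cmul (star g) (invC_star hg) x
      = rmul (reB g) (reB_inv hg) x + (-Complex.I) • rmul (imB g) (imB_inv hg) x := by
    refine et_ext (fun l => ?_)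
    rw [cmul_apply, et_add_apply, et_smul_apply, rmul_apply, rmul_apply, reB_apply, imB_apply,
      BoundedContinuousFunction.star_apply, Complex.star_def, conj_eq_re_sub_im]
    ring
  rw [hd1, hd2]
  rw [map_add, ContinuousLinearMap.add_apply, map_smulₛₗ, ContinuousLinearMap.smul_apply,
    map_add (δ a), map_smul (δ a)]
  rw [moveR δ hδ _ _ a x, moveR δ hδ _ _ a x]
  rw [Complex.conj_I]

/-- the invariant function `|v|²` as a real BCF -/
def nsqB (v : ET Λ) : Λ →ᵇ ℝ :=
  BoundedContinuousFunction.ofNormedAddCommGroup (fun l => Complex.normSq ((v : Λ →ᵇ ℂ) l))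
    (Complex.continuous_normSq.comp (v : Λ →ᵇ ℂ).continuous) (‖v‖ * ‖v‖)
    (fun l => by
      rw [Real.norm_eq_abs, abs_of_nonneg (Complex.normSq_nonneg _)]
      rw [Complex.normSq_eq_norm_sq]
      have h := et_norm_apply_le v l
      calc ‖(v : Λ →ᵇ ℂ) l‖ ^ 2
          = ‖(v : Λ →ᵇ ℂ) l‖ * ‖(v : Λ →ᵇ ℂ) l‖ := sq _
        _ ≤ ‖v‖ * ‖v‖ := mul_le_mul h h (norm_nonneg _) (norm_nonneg _))

lemma nsqB_apply (v : ET Λ) (l : Λ) : nsqB v l = Complex.normSq ((v : Λ →ᵇ ℂ) l) := rfl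

lemma nsqB_inv (v : ET Λ) : invR (nsqB v) := by
  intro t l
  rw [nsqB_apply, nsqB_apply, v.2.2 t l, map_mul, Circle.normSq_coe, one_mul]

lemma nsqB_nonneg (v : ET Λ) (l : Λ) : 0 ≤ nsqB v l := Complex.normSq_nonneg _

lemma nsqB_le (v : ET Λ) (l : Λ) : nsqB v l ≤ ‖v‖ * ‖v‖ := by
  rw [nsqB_apply, Complex.normSq_eq_norm_sq]
  have h := et_norm_apply_le v l
  calc ‖(v : Λ →ᵇ ℂ) l‖ ^ 2
      = ‖(v : Λ →ᵇ ℂ) l‖ * ‖(v : Λ →ᵇ ℂ) l‖ := sq _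
    _ ≤ ‖v‖ * ‖v‖ := mul_le_mul h h (norm_nonneg _) (norm_nonneg _)

lemma trip_vva (v a' : ET Λ) : jtripE v v a' = rmul (nsqB v) (nsqB_inv v) a' := by
  refine et_ext (fun l => ?_)
  rw [jtripE_apply, rmul_apply, nsqB_apply, Complex.star_def, Complex.mul_conj]

lemma cor2 (hδ : IsTernaryDerE δ) (v a x : ET Λ) :
    δ v (jtripE v a x) = δ a (rmul (nsqB v) (nsqB_inv v) x) := by
  set g : Λ →ᵇ ℂ := (a : Λ →ᵇ ℂ) * star (v : Λ →ᵇ ℂ) with hg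
  have hginv : invC g := by
    intro t l
    rw [hg]
    simp only [BoundedContinuousFunction.mul_apply, BoundedContinuousFunction.star_apply]
    rw [a.2.2 t l, v.2.2 t l, Complex.star_def, map_mul]
    have ht : (t : ℂ) * (starRingEnd ℂ) (t : ℂ) = 1 := by
      rw [Complex.mul_conj, Circle.normSq_coe]; norm_num
    calc (t : ℂ) * (a : Λ →ᵇ ℂ) l * ((starRingEnd ℂ) (t : ℂ) * (starRingEnd ℂ) ((v : Λ →ᵇ ℂ) l))
        = ((t : ℂ) * (starRingEnd ℂ) (t : ℂ))
          * ((a : Λ →ᵇ ℂ) l * (starRingEnd ℂ) ((v : Λ →ᵇ ℂ) l)) := by ring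
      _ = (a : Λ →ᵇ ℂ) l * (starRingEnd ℂ) ((v : Λ →ᵇ ℂ) l) := by rw [ht, one_mul]
      _ = (a : Λ →ᵇ ℂ) l * star ((v : Λ →ᵇ ℂ) l) := rfl
  have h1 : cmul (star g) (invC_star hginv) x = jtripE v a x := by
    refine et_ext (fun l => ?_)
    rw [cmul_apply, jtripE_apply, BoundedContinuousFunction.star_apply, hg,
      BoundedContinuousFunction.mul_apply, BoundedContinuousFunction.star_apply,
      star_mul', star_star]
    ring
  have h2 : cmul g hginv v = rmul (nsqB v) (nsqB_inv v) a := by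
    refine et_ext (fun l => ?_)
    rw [cmul_apply, rmul_apply, nsqB_apply, hg, BoundedContinuousFunction.mul_apply,
      BoundedContinuousFunction.star_apply]
    calc (a : Λ →ᵇ ℂ) l * star ((v : Λ →ᵇ ℂ) l) * (v : Λ →ᵇ ℂ) l
        = (v : Λ →ᵇ ℂ) l * star ((v : Λ →ᵇ ℂ) l) * (a : Λ →ᵇ ℂ) l := by ring
      _ = _ := by rw [Complex.star_def, Complex.mul_conj]
  calc δ v (jtripE v a x) = δ v (cmul (star g) (invC_star hginv) x) := by rw [h1]
    _ = δ (cmul g hginv v) x := (moveC δ hδ g hginv v x).symm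
    _ = δ (rmul (nsqB v) (nsqB_inv v) a) x := by rw [h2]
    _ = δ a (rmul (nsqB v) (nsqB_inv v) x) := moveR δ hδ _ _ a x

lemma antiherm (hδ : IsTernaryDerE δ) (v a x : ET Λ) :
    (starRingEnd ℂ) (δ v (jtripE v x a)) = - δ a (rmul (nsqB v) (nsqB_inv v) x) := by
  have hid := hδ v v a x
  rw [trip_vva v a, trip_vva v x] at hid
  rw [moveR δ hδ _ _ a x] at hid
  rw [cor2 δ hδ v a x] at hid
  linear_combination (-1 : ℂ) * hid

lemma theta_term (hδ : IsTernaryDerE δ) (v a x : ET Λ) :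
    (starRingEnd ℂ) ((((-2⁻¹ : ℂ) • δ v : StrongDual ℂ (ET Λ))) (jtripE v x a))
      - (((-2⁻¹ : ℂ) • δ v : StrongDual ℂ (ET Λ))) (jtripE v a x)
      = δ a (rmul (nsqB v) (nsqB_inv v) x) := by
  have h1 := antiherm δ hδ v a x
  have h2 := cor2 δ hδ v a x
  rw [ContinuousLinearMap.smul_apply, ContinuousLinearMap.smul_apply]
  rw [smul_eq_mul, smul_eq_mul, map_mul]
  rw [h1, h2]
  have : (starRingEnd ℂ) (-2⁻¹ : ℂ) = (-2⁻¹ : ℂ) := by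
    rw [map_neg, map_inv₀, Complex.conj_ofNat]
  rw [this]
  ring

end ATWA
namespace ATWA

/-! ### truncation machinery for the tail lemma -/

def trunc (t₀ u : ℝ) : ℝ := min 1 (max 0 (2*u/t₀ - 1))

lemma trunc_nonneg (t₀ u : ℝ) : 0 ≤ trunc t₀ u := le_min (by norm_num) (le_max_left _ _)

lemma trunc_le_one (t₀ u : ℝ) : trunc t₀ u ≤ 1 := min_le_left _ _

lemma trunc_abs_le (t₀ u : ℝ) : |trunc t₀ u| ≤ 1 := by
  rw [abs_of_nonneg (trunc_nonneg t₀ u)]; exact trunc_le_one t₀ u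

lemma trunc_eq_one {t₀ u : ℝ} (ht : 0 < t₀) (hu : t₀ ≤ u) : trunc t₀ u = 1 := by
  unfold trunc
  have h1 : (1:ℝ) ≤ 2*u/t₀ - 1 := by
    rw [le_sub_iff_add_le, le_div_iff₀ ht]
    linarith
  rw [max_eq_right (by linarith), min_eq_left h1]

lemma trunc_pos_of_ne {t₀ u : ℝ} (ht : 0 < t₀) (hne : trunc t₀ u ≠ 0) : t₀/2 < u := by
  by_contra h'
  push_neg at h'
  apply hne
  unfold trunc
  have h1 : 2*u/t₀ - 1 ≤ 0 := by
    rw [sub_nonpos, div_le_one ht]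
    linarith
  rw [max_eq_left h1, min_eq_right (by norm_num)]

lemma continuous_trunc (t₀ : ℝ) : Continuous (trunc t₀) := by
  unfold trunc
  exact continuous_const.min
    (continuous_const.max (((continuous_const.mul continuous_id).div_const t₀).sub
      continuous_const))

variable {Λ : Type*} [TopologicalSpace Λ] [LocallyCompactSpace Λ] [T2Space Λ]
  [MulAction Circle Λ] [ContinuousSMul Circle Λ]

/-- the truncation cutoff `trunc t₀ ∘ |a|²` as a real BCF -/
def chiB (t₀ : ℝ) (a : ET Λ) : Λ →ᵇ ℝ :=
  BoundedContinuousFunction.ofNormedAddCommGroup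
    (fun l => trunc t₀ (Complex.normSq ((a : Λ →ᵇ ℂ) l)))
    ((continuous_trunc t₀).comp (Complex.continuous_normSq.comp (a : Λ →ᵇ ℂ).continuous)) 1
    (fun l => by rw [Real.norm_eq_abs]; exact trunc_abs_le _ _)

lemma chiB_apply (t₀ : ℝ) (a : ET Λ) (l : Λ) :
    chiB t₀ a l = trunc t₀ (Complex.normSq ((a : Λ →ᵇ ℂ) l)) := rfl

lemma chiB_inv (t₀ : ℝ) (a : ET Λ) : invR (chiB t₀ a) := by
  intro t l
  rw [chiB_apply, chiB_apply, a.2.2 t l, map_mul, Circle.normSq_coe, one_mul]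

/-- the truncation of an element of `ET` -/
def atrunc (t₀ : ℝ) (a : ET Λ) : ET Λ := rmul (chiB t₀ a) (chiB_inv t₀ a) a

lemma atrunc_apply (t₀ : ℝ) (a : ET Λ) (l : Λ) :
    ((atrunc t₀ a : ET Λ) : Λ →ᵇ ℂ) l
      = ((trunc t₀ (Complex.normSq ((a : Λ →ᵇ ℂ) l)) : ℝ) : ℂ) * (a : Λ →ᵇ ℂ) l := rfl

lemma atrunc_norm_le (t₀ : ℝ) (a : ET Λ) : ‖atrunc t₀ a‖ ≤ ‖a‖ := by
  have := rmul_norm_le (chiB t₀ a) (chiB_inv t₀ a) a (zero_le_one)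
    (fun l => by rw [chiB_apply]; exact trunc_abs_le _ _)
  rw [one_mul] at this; exact this

lemma atrunc_sub_le {t₀ : ℝ} (ht : 0 < t₀) (a : ET Λ) :
    ‖a - atrunc t₀ a‖ ≤ Real.sqrt t₀ := by
  refine et_norm_le (Real.sqrt_nonneg _) (fun l => ?_)
  have happ : ((a - atrunc t₀ a : ET Λ) : Λ →ᵇ ℂ) l
      = (1 - ((trunc t₀ (Complex.normSq ((a : Λ →ᵇ ℂ) l)) : ℝ) : ℂ)) * (a : Λ →ᵇ ℂ) l := by
    show (a : Λ →ᵇ ℂ) l - ((atrunc t₀ a : ET Λ) : Λ →ᵇ ℂ) l = _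
    rw [atrunc_apply]; ring
  rw [happ, norm_mul]
  rcases le_or_gt t₀ (Complex.normSq ((a : Λ →ᵇ ℂ) l)) with h | h
  · rw [trunc_eq_one ht h]
    simp [Real.sqrt_nonneg]
  · have h1 : ‖(1 - ((trunc t₀ (Complex.normSq ((a : Λ →ᵇ ℂ) l)) : ℝ) : ℂ))‖ ≤ 1 := by
      rw [show (1 - ((trunc t₀ (Complex.normSq ((a : Λ →ᵇ ℂ) l)) : ℝ) : ℂ))
          = (((1 - trunc t₀ (Complex.normSq ((a : Λ →ᵇ ℂ) l)) : ℝ)) : ℂ) by push_cast; ring]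
      rw [Complex.norm_real, Real.norm_eq_abs, abs_of_nonneg (by
        have := trunc_le_one t₀ (Complex.normSq ((a : Λ →ᵇ ℂ) l)); linarith)]
      have := trunc_nonneg t₀ (Complex.normSq ((a : Λ →ᵇ ℂ) l))
      linarith
    have h2 : ‖(a : Λ →ᵇ ℂ) l‖ ≤ Real.sqrt t₀ := by
      rw [Complex.norm_def]
      exact Real.sqrt_le_sqrt h.le
    calc ‖(1 - _root_.id ((trunc t₀ (Complex.normSq ((a : Λ →ᵇ ℂ) l)) : ℝ) : ℂ))‖
          * ‖(a : Λ →ᵇ ℂ) l‖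
        ≤ 1 * Real.sqrt t₀ := mul_le_mul h1 h2 (norm_nonneg _) (by norm_num)
      _ = Real.sqrt t₀ := one_mul _
  
lemma atrunc_ne {t₀ : ℝ} (ht : 0 < t₀) (a : ET Λ) (l : Λ)
    (h : ((atrunc t₀ a : ET Λ) : Λ →ᵇ ℂ) l ≠ 0) :
    t₀/2 < Complex.normSq ((a : Λ →ᵇ ℂ) l) := by
  rw [atrunc_apply] at h
  have h1 : trunc t₀ (Complex.normSq ((a : Λ →ᵇ ℂ) l)) ≠ 0 := by
    intro h'
    apply h
    rw [h']; simp
  exact trunc_pos_of_ne ht h1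

/-- a state in the recursive construction for the tail lemma -/
structure TState (Λ : Type*) [TopologicalSpace Λ] [LocallyCompactSpace Λ] [T2Space Λ]
    [MulAction Circle Λ] [ContinuousSMul Circle Λ] where
  n : ℕ
  z : Fin n → ET Λ
  s : ℝ
  hs : 0 < s

/-- the accumulated invariant weight function of a state -/
def qs (st : TState Λ) (l : Λ) : ℝ := ∑ i, Complex.normSq ((st.z i : Λ →ᵇ ℂ) l)

lemma qs_nonneg (st : TState Λ) (l : Λ) : 0 ≤ qs st l :=
  Finset.sum_nonneg (fun i _ => Complex.normSq_nonneg _)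

end ATWA
namespace ATWA

variable {Λ : Type*} [TopologicalSpace Λ] [LocallyCompactSpace Λ] [T2Space Λ]
  [MulAction Circle Λ] [ContinuousSMul Circle Λ]

variable (δ : (ET Λ) →SL[starRingEnd ℂ] (StrongDual ℂ (ET Λ)))

/-- The tail lemma: outside a suitable "compact" region described by finitely many
elements of `E`, the derivation is uniformly small. -/
lemma tail (hδ : IsTernaryDerE δ) {ε : ℝ} (hε : 0 < ε) :
    ∃ (n : ℕ) (z : Fin n → ET Λ) (s : ℝ), 0 < s ∧
      ∀ a x : ET Λ,
        (∀ l, s ≤ ∑ i, Complex.normSq ((z i : Λ →ᵇ ℂ) l) → (a : Λ →ᵇ ℂ) l = 0) →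
        (∀ l, s ≤ ∑ i, Complex.normSq ((z i : Λ →ᵇ ℂ) l) → (x : Λ →ᵇ ℂ) l = 0) →
        ‖δ a x‖ ≤ ε * ‖a‖ * ‖x‖ := by
  classical
  by_contra hcon
  push_neg at hcon
  -- normalized bad pairs for every state
  have h'' : ∀ st : TState Λ, ∃ a x : ET Λ, ‖a‖ = 1 ∧ ‖x‖ = 1 ∧
      (∀ l, st.s ≤ qs st l → (a : Λ →ᵇ ℂ) l = 0) ∧
      (∀ l, st.s ≤ qs st l → (x : Λ →ᵇ ℂ) l = 0) ∧ ε < ‖δ a x‖ := by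
    intro st
    obtain ⟨a, x, hva, hvx, hlt⟩ := hcon st.n st.z st.s st.hs
    have ha0 : ‖a‖ ≠ 0 := by
      intro h0
      rw [norm_eq_zero] at h0
      subst h0
      rw [map_zero] at hlt
      simp at hlt
    have hx0 : ‖x‖ ≠ 0 := by
      intro h0
      rw [norm_eq_zero] at h0
      subst h0
      rw [map_zero (δ a)] at hlt
      rw [norm_zero, norm_zero, mul_zero] at hlt
      exact lt_irrefl _ hlt
    have hapos : 0 < ‖a‖ := lt_of_le_of_ne (norm_nonneg a) (Ne.symm ha0)
    have hxpos : 0 < ‖x‖ := lt_of_le_of_ne (norm_nonneg x) (Ne.symm hx0)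
    refine ⟨((‖a‖⁻¹ : ℝ) : ℂ) • a, ((‖x‖⁻¹ : ℝ) : ℂ) • x, ?_, ?_, ?_, ?_, ?_⟩
    · rw [norm_smul (((‖a‖⁻¹ : ℝ) : ℂ)) a, Complex.norm_real, Real.norm_eq_abs,
        abs_of_nonneg (by positivity)]
      exact inv_mul_cancel₀ ha0
    · rw [norm_smul (((‖x‖⁻¹ : ℝ) : ℂ)) x, Complex.norm_real, Real.norm_eq_abs,
        abs_of_nonneg (by positivity)]
      exact inv_mul_cancel₀ hx0
    · intro l hl
      rw [et_smul_apply, hva l hl, mul_zero]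
    · intro l hl
      rw [et_smul_apply, hvx l hl, mul_zero]
    · have hval : δ (((‖a‖⁻¹ : ℝ) : ℂ) • a) (((‖x‖⁻¹ : ℝ) : ℂ) • x)
          = ((‖a‖⁻¹ : ℝ) : ℂ) * (((‖x‖⁻¹ : ℝ) : ℂ) * δ a x) := by
        simp only [map_smulₛₗ, map_smul, ContinuousLinearMap.smul_apply, smul_eq_mul,
          Complex.conj_ofReal, RingHom.id_apply]
        ring
      rw [hval]
      rw [norm_mul, norm_mul, Complex.norm_real, Complex.norm_real, Real.norm_eq_abs,
        Real.norm_eq_abs, abs_of_nonneg (by positivity : (0:ℝ) ≤ ‖a‖⁻¹),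
        abs_of_nonneg (by positivity : (0:ℝ) ≤ ‖x‖⁻¹)]
      calc ε = (ε * ‖a‖ * ‖x‖) * (‖a‖⁻¹ * ‖x‖⁻¹) := by
            rw [show (ε * ‖a‖ * ‖x‖) * (‖a‖⁻¹ * ‖x‖⁻¹)
                = ε * (‖a‖ * ‖a‖⁻¹) * (‖x‖ * ‖x‖⁻¹) by ring,
              mul_inv_cancel₀ ha0, mul_inv_cancel₀ hx0, mul_one, mul_one]
        _ < ‖δ a x‖ * (‖a‖⁻¹ * ‖x‖⁻¹) := by
            apply mul_lt_mul_of_pos_right hlt (by positivity)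
        _ = ‖a‖⁻¹ * (‖x‖⁻¹ * ‖δ a x‖) := by ring
  choose A0 X0 hA1 hX1 hvA hvX hGa using h''
  -- truncation constant
  set κ : ℝ := ε / (8 * (‖δ‖ + 1)) with hκ
  have hκpos : 0 < κ := by rw [hκ]; positivity
  set t₀ : ℝ := κ^2 with ht₀def
  have ht₀ : 0 < t₀ := by rw [ht₀def]; positivity
  have hsqrt : Real.sqrt t₀ = κ := by rw [ht₀def]; exact Real.sqrt_sq hκpos.le
  -- the recursion
  set step : TState Λ → TState Λ := fun st =>
    ⟨st.n + 1 + 1, Fin.snoc (Fin.snoc st.z (A0 st)) (X0 st), min st.s (t₀/2),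
      lt_min st.hs (by positivity)⟩ with hstep
  set st0 : TState Λ := ⟨0, fun i => i.elim0, 1, one_pos⟩ with hst0
  set seq : ℕ → TState Λ := fun k => step^[k] st0 with hseqdef
  have hseq : ∀ k, seq (k+1) = step (seq k) := by
    intro k
    rw [hseqdef]
    exact Function.iterate_succ_apply' step k st0
  have hqs_step : ∀ (st : TState Λ) (l : Λ), qs (step st) l
      = qs st l + Complex.normSq ((A0 st : Λ →ᵇ ℂ) l)
        + Complex.normSq ((X0 st : Λ →ᵇ ℂ) l) := by
    intro st l
    rw [hstep]
    show ∑ i : Fin (st.n + 1 + 1), _ = _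
    rw [Fin.sum_univ_castSucc]
    simp only [Fin.snoc_castSucc, Fin.snoc_last]
    rw [Fin.sum_univ_castSucc]
    simp only [Fin.snoc_castSucc, Fin.snoc_last]
    rfl
  have hs_step_le : ∀ st : TState Λ, (step st).s ≤ st.s := by
    intro st; rw [hstep]; exact min_le_left _ _
  have hs_t0 : ∀ k, (seq (k+1)).s ≤ t₀/2 := by
    intro k; rw [hseq, hstep]; exact min_le_right _ _
  have hq_mono : ∀ k m, k ≤ m → ∀ l, qs (seq k) l ≤ qs (seq m) l := by
    intro k m hkm
    induction m, hkm using Nat.le_induction with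
    | base => intro l; exact le_refl _
    | succ m hkm ih =>
      intro l
      refine (ih l).trans ?_
      rw [hseq, hqs_step]
      have h1 := Complex.normSq_nonneg ((A0 (seq m) : Λ →ᵇ ℂ) l)
      have h2 := Complex.normSq_nonneg ((X0 (seq m) : Λ →ᵇ ℂ) l)
      linarith
  -- truncated elements
  set at' : ℕ → ET Λ := fun k => atrunc t₀ (A0 (seq k)) with hat
  set xt' : ℕ → ET Λ := fun k => atrunc t₀ (X0 (seq k)) with hxt
  have hatnorm : ∀ k, ‖at' k‖ ≤ 1 := by
    intro k; rw [hat]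
    exact (atrunc_norm_le t₀ _).trans (le_of_eq (hA1 (seq k)))
  have hxtnorm : ∀ k, ‖xt' k‖ ≤ 1 := by
    intro k; rw [hxt]
    exact (atrunc_norm_le t₀ _).trans (le_of_eq (hX1 (seq k)))
  -- disjointness
  have hkill : ∀ m k, m < k → ∀ l : Λ,
      (t₀/2 < Complex.normSq ((A0 (seq m) : Λ →ᵇ ℂ) l)
        ∨ t₀/2 < Complex.normSq ((X0 (seq m) : Λ →ᵇ ℂ) l)) →
      ((A0 (seq k) : Λ →ᵇ ℂ) l = 0 ∧ (X0 (seq k) : Λ →ᵇ ℂ) l = 0) := by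
    intro m k hmk l hl
    have h1 : t₀/2 < qs (seq (m+1)) l := by
      rw [hseq, hqs_step]
      have h2 := Complex.normSq_nonneg ((A0 (seq m) : Λ →ᵇ ℂ) l)
      have h3 := Complex.normSq_nonneg ((X0 (seq m) : Λ →ᵇ ℂ) l)
      have h4 := qs_nonneg (seq m) l
      rcases hl with h | h <;> linarith
    have h2 : qs (seq (m+1)) l ≤ qs (seq k) l := hq_mono (m+1) k hmk l
    have h3 : (seq k).s ≤ t₀/2 := by
      obtain ⟨k', rfl⟩ : ∃ k', k = k' + 1 := ⟨k - 1, by omega⟩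
      exact hs_t0 k'
    exact ⟨hvA (seq k) l (by linarith), hvX (seq k) l (by linarith)⟩
  have hazero : ∀ k l, (A0 (seq k) : Λ →ᵇ ℂ) l = 0 → ((at' k : ET Λ) : Λ →ᵇ ℂ) l = 0 := by
    intro k l h
    rw [hat, atrunc_apply, h, mul_zero]
  have hxzero : ∀ k l, (X0 (seq k) : Λ →ᵇ ℂ) l = 0 → ((xt' k : ET Λ) : Λ →ᵇ ℂ) l = 0 := by
    intro k l h
    rw [hxt, atrunc_apply, h, mul_zero]
  have haa : ∀ k m, k ≠ m → ∀ l, ((at' k : ET Λ) : Λ →ᵇ ℂ) l = 0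
      ∨ ((at' m : ET Λ) : Λ →ᵇ ℂ) l = 0 := by
    intro k m hne l
    rcases hne.lt_or_gt with hkm | hmk
    · by_cases h : ((at' k : ET Λ) : Λ →ᵇ ℂ) l = 0
      · exact Or.inl h
      · refine Or.inr (hazero m l ?_)
        have := atrunc_ne ht₀ (A0 (seq k)) l (by rw [hat] at h; exact h)
        exact (hkill k m hkm l (Or.inl this)).1
    · by_cases h : ((at' m : ET Λ) : Λ →ᵇ ℂ) l = 0
      · exact Or.inr h
      · refine Or.inl (hazero k l ?_)
        have := atrunc_ne ht₀ (A0 (seq m)) l (by rw [hat] at h; exact h)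
        exact (hkill m k hmk l (Or.inl this)).1
  have hxx : ∀ k m, k ≠ m → ∀ l, ((xt' k : ET Λ) : Λ →ᵇ ℂ) l = 0
      ∨ ((xt' m : ET Λ) : Λ →ᵇ ℂ) l = 0 := by
    intro k m hne l
    rcases hne.lt_or_gt with hkm | hmk
    · by_cases h : ((xt' k : ET Λ) : Λ →ᵇ ℂ) l = 0
      · exact Or.inl h
      · refine Or.inr (hxzero m l ?_)
        have := atrunc_ne ht₀ (X0 (seq k)) l (by rw [hxt] at h; exact h)
        exact (hkill k m hkm l (Or.inr this)).2
    · by_cases h : ((xt' m : ET Λ) : Λ →ᵇ ℂ) l = 0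
      · exact Or.inr h
      · refine Or.inl (hxzero k l ?_)
        have := atrunc_ne ht₀ (X0 (seq m)) l (by rw [hxt] at h; exact h)
        exact (hkill m k hmk l (Or.inr this)).2
  have hax : ∀ k m, k ≠ m → ∀ l,
      ((at' k : ET Λ) : Λ →ᵇ ℂ) l * ((xt' m : ET Λ) : Λ →ᵇ ℂ) l = 0 := by
    intro k m hne l
    rcases hne.lt_or_gt with hkm | hmk
    · by_cases h : ((at' k : ET Λ) : Λ →ᵇ ℂ) l = 0
      · rw [h, zero_mul]
      · have := atrunc_ne ht₀ (A0 (seq k)) l (by rw [hat] at h; exact h)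
        rw [hxzero m l (hkill k m hkm l (Or.inl this)).2, mul_zero]
    · by_cases h : ((xt' m : ET Λ) : Λ →ᵇ ℂ) l = 0
      · rw [h, mul_zero]
      · have := atrunc_ne ht₀ (X0 (seq m)) l (by rw [hxt] at h; exact h)
        rw [hazero k l (hkill m k hmk l (Or.inr this)).1, zero_mul]
  -- the values G k
  set G : ℕ → ℂ := fun k => δ (at' k) (xt' k) with hGdef
  have hGlow : ∀ k, ε/2 ≤ ‖G k‖ := by
    intro k
    have h1 : ε < ‖δ (A0 (seq k)) (X0 (seq k))‖ := hGa (seq k)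
    have hdiff : δ (A0 (seq k)) (X0 (seq k)) - G k
        = δ (A0 (seq k) - at' k) (X0 (seq k))
          + δ (at' k) (X0 (seq k) - xt' k) := by
      rw [map_sub, map_sub (δ (at' k)), ContinuousLinearMap.sub_apply, hGdef]
      ring
    have h2 : ‖δ (A0 (seq k)) (X0 (seq k)) - G k‖ ≤ 2 * ‖δ‖ * κ := by
      rw [hdiff]
      have hb1 : ‖δ (A0 (seq k) - at' k) (X0 (seq k))‖ ≤ ‖δ‖ * κ * 1 := by
        refine (Gbound δ _ _).trans ?_
        have h3 : ‖A0 (seq k) - at' k‖ ≤ κ := by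
          rw [hat, ← hsqrt]; exact atrunc_sub_le ht₀ _
        gcongr
        exact le_of_eq (hX1 (seq k))
      have hb2 : ‖δ (at' k) (X0 (seq k) - xt' k)‖ ≤ ‖δ‖ * 1 * κ := by
        refine (Gbound δ _ _).trans ?_
        have h3 : ‖X0 (seq k) - xt' k‖ ≤ κ := by
          rw [hxt, ← hsqrt]; exact atrunc_sub_le ht₀ _
        gcongr
        exact hatnorm k
      calc ‖_ + _‖ ≤ ‖δ (A0 (seq k) - at' k) (X0 (seq k))‖
            + ‖δ (at' k) (X0 (seq k) - xt' k)‖ := norm_add_le _ _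
        _ ≤ ‖δ‖ * κ * 1 + ‖δ‖ * 1 * κ := add_le_add hb1 hb2
        _ = 2 * ‖δ‖ * κ := by ring
    have h4 : 2 * ‖δ‖ * κ ≤ ε/4 := by
      have h5 : (0:ℝ) ≤ ‖δ‖ := norm_nonneg δ
      have h6 : (0:ℝ) < ‖δ‖ + 1 := by linarith
      rw [hκ]
      rw [show (2:ℝ) * ‖δ‖ * (ε / (8 * (‖δ‖ + 1)))
          = (‖δ‖ / (‖δ‖ + 1)) * (ε/4) by field_simp; ring]
      have h7 : ‖δ‖ / (‖δ‖ + 1) ≤ 1 := by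
        rw [div_le_one h6]; linarith
      exact mul_le_of_le_one_left (by positivity) h7
    have h8 := norm_sub_norm_le (δ (A0 (seq k)) (X0 (seq k))) (G k)
    linarith
  have hGne : ∀ k, G k ≠ 0 := by
    intro k h0
    have := hGlow k
    rw [h0, norm_zero] at this
    linarith
  -- phases
  set ω : ℕ → ℂ := fun k => G k / ((‖G k‖ : ℝ) : ℂ) with hω
  have hωnorm : ∀ k, ‖ω k‖ = 1 := by
    intro k
    rw [hω]
    rw [norm_div, Complex.norm_real, Real.norm_eq_abs, abs_of_nonneg (norm_nonneg _)]
    exact div_self (by simpa using hGne k)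
  have hωmul : ∀ k, (starRingEnd ℂ) (ω k) * G k = ((‖G k‖ : ℝ) : ℂ) := by
    intro k
    have hne : ((‖G k‖ : ℝ) : ℂ) ≠ 0 := by
      simp only [ne_eq, Complex.ofReal_eq_zero, norm_eq_zero]
      exact hGne k
    rw [hω, map_div₀, Complex.conj_ofReal, div_mul_eq_mul_div, mul_comm,
      Complex.mul_conj, Complex.normSq_eq_norm_sq]
    rw [sq, Complex.ofReal_mul, mul_div_assoc, div_self hne, mul_one]
  -- choose N by harmonic divergence
  obtain ⟨N, hN⟩ : ∃ N : ℕ, 2 * (‖δ‖ + 1) / ε ≤ ∑ k ∈ Finset.range N, (1/((k:ℝ)+1)) := by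
    have ht := Real.tendsto_sum_range_one_div_nat_succ_atTop
    exact (ht.eventually_ge_atTop _).exists
  set tw : ℕ → ℝ := fun k => Real.sqrt (1/((k:ℝ)+1)) with htw
  have htwsq : ∀ k, tw k ^ 2 = 1/((k:ℝ)+1) := by
    intro k; rw [htw, Real.sq_sqrt (by positivity)]
  have htwle : ∀ k, tw k ≤ 1 := by
    intro k
    rw [htw, show (1:ℝ) = Real.sqrt 1 by rw [Real.sqrt_one]]
    apply Real.sqrt_le_sqrt
    rw [Real.sqrt_one]
    rw [div_le_one (by positivity)]
    linarith [Nat.cast_nonneg (α := ℝ) k]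
  have htwpos : ∀ k, 0 ≤ tw k := fun k => Real.sqrt_nonneg _
  set SA : ET Λ := ∑ k ∈ Finset.range N, (((tw k : ℝ) : ℂ) * ω k) • at' k with hSA
  set SX : ET Λ := ∑ m ∈ Finset.range N, ((tw m : ℝ) : ℂ) • xt' m with hSX
  have hSAnorm : ‖SA‖ ≤ 1 := by
    rw [hSA]
    refine et_norm_le zero_le_one (fun l => ?_)
    rw [et_sum_apply]
    refine norm_sum_le_of_pairwise _ _ _ zero_le_one (fun k hk => ?_) (fun k hk m hm hne => ?_)
    · rw [et_smul_apply, norm_mul, norm_mul]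
      rw [Complex.norm_real, Real.norm_eq_abs, abs_of_nonneg (htwpos k), hωnorm k]
      calc tw k * 1 * ‖((at' k : ET Λ) : Λ →ᵇ ℂ) l‖
          ≤ 1 * 1 * ‖at' k‖ := by
            have := et_norm_apply_le (at' k) l
            have := htwle k
            have := norm_nonneg (((at' k : ET Λ) : Λ →ᵇ ℂ) l)
            nlinarith [hatnorm k]
        _ ≤ 1 := by rw [one_mul, one_mul]; exact hatnorm k
    · rcases haa k m hne l with h | h
      · left; rw [et_smul_apply, h, mul_zero]
      · right; rw [et_smul_apply, h, mul_zero]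
  have hSXnorm : ‖SX‖ ≤ 1 := by
    rw [hSX]
    refine et_norm_le zero_le_one (fun l => ?_)
    rw [et_sum_apply]
    refine norm_sum_le_of_pairwise _ _ _ zero_le_one (fun k hk => ?_) (fun k hk m hm hne => ?_)
    · rw [et_smul_apply, norm_mul]
      rw [Complex.norm_real, Real.norm_eq_abs, abs_of_nonneg (htwpos k)]
      calc tw k * ‖((xt' k : ET Λ) : Λ →ᵇ ℂ) l‖
          ≤ 1 * ‖xt' k‖ := by
            have := et_norm_apply_le (xt' k) l
            have := htwle k
            have := norm_nonneg (((xt' k : ET Λ) : Λ →ᵇ ℂ) l)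
            nlinarith [hxtnorm k]
        _ ≤ 1 := by rw [one_mul]; exact hxtnorm k
    · rcases hxx k m hne l with h | h
      · left; rw [et_smul_apply, h, mul_zero]
      · right; rw [et_smul_apply, h, mul_zero]
  have hGzero : ∀ k m, k ≠ m → δ (at' k) (xt' m) = 0 := by
    intro k m hne
    exact der_zero_of_mul_zero δ hδ _ _ (hax k m hne)
  have hexp : δ SA SX = ((∑ k ∈ Finset.range N, (tw k)^2 * ‖G k‖ : ℝ) : ℂ) := by
    rw [hSA, map_sum δ, ContinuousLinearMap.sum_apply]
    rw [show ((∑ k ∈ Finset.range N, (tw k)^2 * ‖G k‖ : ℝ) : ℂ)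
        = ∑ k ∈ Finset.range N, (((tw k)^2 * ‖G k‖ : ℝ) : ℂ) from Complex.ofReal_sum _ _]
    refine Finset.sum_congr rfl (fun k hk => ?_)
    rw [map_smulₛₗ, ContinuousLinearMap.smul_apply, smul_eq_mul]
    have hδSX : δ (at' k) SX = ((tw k : ℝ) : ℂ) * G k := by
      rw [hSX, map_sum (δ (at' k))]
      rw [Finset.sum_eq_single_of_mem k hk (fun m hm hmk => ?_)]
      · rw [map_smul (δ (at' k)), smul_eq_mul, hGdef]
      · rw [map_smul (δ (at' k)), smul_eq_mul, hGzero k m (Ne.symm hmk), mul_zero]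
    rw [hδSX, map_mul, Complex.conj_ofReal]
    calc ((tw k : ℝ) : ℂ) * (starRingEnd ℂ) (ω k) * (((tw k : ℝ) : ℂ) * G k)
        = ((tw k : ℝ) : ℂ) * ((tw k : ℝ) : ℂ) * ((starRingEnd ℂ) (ω k) * G k) := by ring
      _ = ((tw k : ℝ) : ℂ) * ((tw k : ℝ) : ℂ) * ((‖G k‖ : ℝ) : ℂ) := by rw [hωmul k]
      _ = (((tw k)^2 * ‖G k‖ : ℝ) : ℂ) := by push_cast; ring
  -- the contradiction
  have hupper : ‖δ SA SX‖ ≤ ‖δ‖ := by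
    calc ‖δ SA SX‖ ≤ ‖δ‖ * ‖SA‖ * ‖SX‖ := Gbound δ _ _
      _ ≤ ‖δ‖ * 1 * 1 := by
          have h := norm_nonneg δ
          gcongr
      _ = ‖δ‖ := by ring
  have hlower : ‖δ‖ + 1 ≤ ‖δ SA SX‖ := by
    rw [hexp]
    rw [Complex.norm_real, Real.norm_eq_abs, abs_of_nonneg
      (Finset.sum_nonneg (fun k _ => by positivity))]
    have hterm : ∀ k ∈ Finset.range N, (ε/2) * (1/((k:ℝ)+1)) ≤ (tw k)^2 * ‖G k‖ := by
      intro k _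
      rw [htwsq k]
      have h1 := hGlow k
      have h2 : (0:ℝ) < 1/((k:ℝ)+1) := by positivity
      calc (ε/2) * (1/((k:ℝ)+1)) = (1/((k:ℝ)+1)) * (ε/2) := by ring
        _ ≤ (1/((k:ℝ)+1)) * ‖G k‖ := by
            apply mul_le_mul_of_nonneg_left h1 h2.le
    have h3 : (ε/2) * ∑ k ∈ Finset.range N, (1/((k:ℝ)+1))
        ≤ ∑ k ∈ Finset.range N, (tw k)^2 * ‖G k‖ := by
      rw [Finset.mul_sum]
      exact Finset.sum_le_sum hterm
    have h4 : ‖δ‖ + 1 ≤ (ε/2) * ∑ k ∈ Finset.range N, (1/((k:ℝ)+1)) := by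
      have h5 : (ε/2) * (2 * (‖δ‖ + 1) / ε) ≤ (ε/2) * ∑ k ∈ Finset.range N, (1/((k:ℝ)+1)) := by
        apply mul_le_mul_of_nonneg_left hN (by positivity)
      calc ‖δ‖ + 1 = (ε/2) * (2 * (‖δ‖ + 1) / ε) := by field_simp
        _ ≤ _ := h5
    linarith
  linarith

end ATWA
namespace ATWA

variable {Λ : Type*} [TopologicalSpace Λ] [LocallyCompactSpace Λ] [T2Space Λ]
  [MulAction Circle Λ] [ContinuousSMul Circle Λ]

lemma norm_jtrip_le (a b c : ET Λ) : ‖jtripE a b c‖ ≤ ‖a‖ * ‖b‖ * ‖c‖ := by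
  show ‖(a : Λ →ᵇ ℂ) * star (b : Λ →ᵇ ℂ) * (c : Λ →ᵇ ℂ)‖ ≤ _
  calc ‖(a : Λ →ᵇ ℂ) * star (b : Λ →ᵇ ℂ) * (c : Λ →ᵇ ℂ)‖
      ≤ ‖(a : Λ →ᵇ ℂ) * star (b : Λ →ᵇ ℂ)‖ * ‖(c : Λ →ᵇ ℂ)‖ := norm_mul_le _ _
    _ ≤ (‖(a : Λ →ᵇ ℂ)‖ * ‖star (b : Λ →ᵇ ℂ)‖) * ‖(c : Λ →ᵇ ℂ)‖ :=
        mul_le_mul_of_nonneg_right (norm_mul_le _ _) (norm_nonneg _)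
    _ = ‖a‖ * ‖b‖ * ‖c‖ := by rw [norm_star]; rfl

lemma jtrip_add_mid (b x y a : ET Λ) :
    jtripE b (x + y) a = jtripE b x a + jtripE b y a := by
  refine et_ext (fun l => ?_)
  rw [et_add_apply, jtripE_apply, jtripE_apply, jtripE_apply, et_add_apply, star_add]
  ring

lemma jtrip_add_right (b a x y : ET Λ) :
    jtripE b a (x + y) = jtripE b a x + jtripE b a y := by
  refine et_ext (fun l => ?_)
  rw [et_add_apply, jtripE_apply, jtripE_apply, jtripE_apply, et_add_apply]
  ring

lemma jtrip_smul_mid (c : ℂ) (b x a : ET Λ) :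
    jtripE b (c • x) a = (starRingEnd ℂ) c • jtripE b x a := by
  refine et_ext (fun l => ?_)
  rw [et_smul_apply, jtripE_apply, jtripE_apply, et_smul_apply, star_mul']
  rw [Complex.star_def]
  ring

lemma jtrip_smul_right (c : ℂ) (b a x : ET Λ) :
    jtripE b a (c • x) = c • jtripE b a x := by
  refine et_ext (fun l => ?_)
  rw [et_smul_apply, jtripE_apply, jtripE_apply, et_smul_apply]
  ring

/-- for fixed `b`, `φ`, `a`, the functional `x ↦ {b,φ,a}(x) - {φ,b,a}(x)`, linear version -/
def innerDerAuxL (b : ET Λ) (φ : StrongDual ℂ (ET Λ)) (a : ET Λ) :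
    (ET Λ) →ₗ[ℂ] ℂ where
  toFun := fun x => (starRingEnd ℂ) (φ (jtripE b x a)) - φ (jtripE b a x)
  map_add' := by
    intro x y
    show (starRingEnd ℂ) (φ (jtripE b (x + y) a)) - φ (jtripE b a (x + y)) = _
    rw [jtrip_add_mid, jtrip_add_right, map_add φ, map_add φ, map_add]
    ring
  map_smul' := by
    intro c x
    show (starRingEnd ℂ) (φ (jtripE b (c • x) a)) - φ (jtripE b a (c • x)) = _
    rw [jtrip_smul_mid, jtrip_smul_right, map_smul φ, map_smul φ]
    simp only [smul_eq_mul, map_mul, RingHom.id_apply, Complex.conj_conj]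
    ring

lemma innerDerAuxL_bound (b : ET Λ) (φ : StrongDual ℂ (ET Λ)) (a x : ET Λ) :
    ‖innerDerAuxL b φ a x‖ ≤ 2 * (‖φ‖ * ‖b‖) * ‖a‖ * ‖x‖ := by
  have h1 : ‖(starRingEnd ℂ) (φ (jtripE b x a))‖ ≤ ‖φ‖ * ‖b‖ * ‖a‖ * ‖x‖ := by
    rw [RCLike.norm_conj]
    calc ‖φ (jtripE b x a)‖ ≤ ‖φ‖ * ‖jtripE b x a‖ := φ.le_opNorm _
      _ ≤ ‖φ‖ * (‖b‖ * ‖x‖ * ‖a‖) :=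
          mul_le_mul_of_nonneg_left (norm_jtrip_le b x a) φ.opNorm_nonneg
      _ = ‖φ‖ * ‖b‖ * ‖a‖ * ‖x‖ := by ring
  have h2 : ‖φ (jtripE b a x)‖ ≤ ‖φ‖ * ‖b‖ * ‖a‖ * ‖x‖ := by
    calc ‖φ (jtripE b a x)‖ ≤ ‖φ‖ * ‖jtripE b a x‖ := φ.le_opNorm _
      _ ≤ ‖φ‖ * (‖b‖ * ‖a‖ * ‖x‖) :=
          mul_le_mul_of_nonneg_left (norm_jtrip_le b a x) φ.opNorm_nonneg
      _ = ‖φ‖ * ‖b‖ * ‖a‖ * ‖x‖ := by ring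
  calc ‖innerDerAuxL b φ a x‖
      ≤ ‖(starRingEnd ℂ) (φ (jtripE b x a))‖ + ‖φ (jtripE b a x)‖ := norm_sub_le _ _
    _ ≤ ‖φ‖ * ‖b‖ * ‖a‖ * ‖x‖ + ‖φ‖ * ‖b‖ * ‖a‖ * ‖x‖ := add_le_add h1 h2
    _ = 2 * (‖φ‖ * ‖b‖) * ‖a‖ * ‖x‖ := by ring

/-- the functional, continuous version -/
def innerDerAux (b : ET Λ) (φ : StrongDual ℂ (ET Λ)) (a : ET Λ) :
    StrongDual ℂ (ET Λ) :=
  LinearMap.mkContinuous (innerDerAuxL b φ a) (2 * (‖φ‖ * ‖b‖) * ‖a‖)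
    (fun x => innerDerAuxL_bound b φ a x)

lemma innerDerAux_apply (b : ET Λ) (φ : StrongDual ℂ (ET Λ)) (a x : ET Λ) :
    innerDerAux b φ a x = (starRingEnd ℂ) (φ (jtripE b x a)) - φ (jtripE b a x) := rfl

lemma innerDerAux_norm_le (b : ET Λ) (φ : StrongDual ℂ (ET Λ)) (a : ET Λ) :
    ‖innerDerAux b φ a‖ ≤ 2 * (‖φ‖ * ‖b‖) * ‖a‖ :=
  LinearMap.mkContinuous_norm_le _ (by positivity) _

/-- the inner ternary derivation `a ↦ {b,φ,a} - {φ,b,a}` -/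
def innerDer (b : ET Λ) (φ : StrongDual ℂ (ET Λ)) :
    (ET Λ) →SL[starRingEnd ℂ] (StrongDual ℂ (ET Λ)) :=
  LinearMap.mkContinuous
    { toFun := innerDerAux b φ
      map_add' := by
        intro a a'
        refine ContinuousLinearMap.ext (fun x => ?_)
        rw [ContinuousLinearMap.add_apply, innerDerAux_apply, innerDerAux_apply,
          innerDerAux_apply]
        rw [jtrip_add_right b x a a', jtrip_add_mid b a a' x, map_add φ, map_add φ, map_add]
        ring
      map_smul' := by
        intro c a
        refine ContinuousLinearMap.ext (fun x => ?_)
        show innerDerAux b φ (c • a) x = ((starRingEnd ℂ) c • innerDerAux b φ a) x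
        rw [ContinuousLinearMap.smul_apply, innerDerAux_apply, innerDerAux_apply]
        rw [jtrip_smul_right c b x a, jtrip_smul_mid c b a x, map_smul φ, map_smul φ]
        simp only [smul_eq_mul, map_mul, RingHom.id_apply, Complex.conj_conj]
        ring }
    (2 * (‖φ‖ * ‖b‖))
    (fun a => by
      simp only [LinearMap.coe_mk, AddHom.coe_mk]
      exact innerDerAux_norm_le b φ a)

lemma innerDer_apply (b : ET Λ) (φ : StrongDual ℂ (ET Λ)) (a x : ET Λ) :
    innerDer b φ a x = (starRingEnd ℂ) (φ (jtripE b x a)) - φ (jtripE b a x) := rfl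

end ATWA
open ATWA in
/-- `E = C₀^𝕋(Λ)` is almost ternary weakly amenable: the inner ternary derivations
are norm-dense in the continuous ternary derivations from `E` to `E*`. -/
theorem commutative_JBstar_triple_almost_ternary_weakly_amenable
    (hfree : ∀ (t : Circle) (l : Λ), t • l = l → t = 1)
    (δ : (ET Λ) →SL[starRingEnd ℂ] (StrongDual ℂ (ET Λ))) (hδ : IsTernaryDerE δ)
    {ε : ℝ} (hε : 0 < ε) :
    ∃ θ : (ET Λ) →SL[starRingEnd ℂ] (StrongDual ℂ (ET Λ)),
      IsInnerTernaryDerE θ ∧ @Norm.norm _ (ContinuousLinearMap.hasOpNorm (𝕜 := ℂ) (𝕜₂ := ℂ) (E := ET Λ)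
        (F := StrongDual ℂ (ET Λ)) (σ₁₂ := starRingEnd ℂ))
        (@HSub.hSub _ _ _ (@instHSub _ (ContinuousLinearMap.sub (R := ℂ) (R₂ := ℂ) (M := ET Λ)
        (M₂ := StrongDual ℂ (ET Λ)) (σ₁₂ := starRingEnd ℂ))) δ θ) < ε := by
  classical
  obtain ⟨n, z, s, hs, htail⟩ := ATWA.tail δ hδ (half_pos hε)
  have hqcont : Continuous (fun l => ∑ i, Complex.normSq ((z i : Λ →ᵇ ℂ) l)) := by
    apply continuous_finset_sum
    intro i _
    exact Complex.continuous_normSq.comp (z i : Λ →ᵇ ℂ).continuous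
  set q : Λ → ℝ := fun l => ∑ i, Complex.normSq ((z i : Λ →ᵇ ℂ) l) with hqdef
  have hq0 : ∀ l, 0 ≤ q l := fun l => Finset.sum_nonneg (fun i _ => Complex.normSq_nonneg _)
  have hqbound : ∀ l, q l ≤ ∑ i, ‖z i‖ * ‖z i‖ := by
    intro l
    apply Finset.sum_le_sum
    intro i _
    have h := ATWA.nsqB_le (z i) l
    rw [ATWA.nsqB_apply] at h
    exact h
  have hqinv : ∀ (t : Circle) (l : Λ), q (t • l) = q l := by
    intro t l
    rw [hqdef]
    refine Finset.sum_congr rfl (fun i _ => ?_)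
    rw [(z i).2.2 t l, map_mul, Circle.normSq_coe, one_mul]
  have hqB : ∃ qq : Λ →ᵇ ℝ, ∀ l, qq l = q l := by
    refine ⟨BoundedContinuousFunction.ofNormedAddCommGroup q hqcont (∑ i, ‖z i‖ * ‖z i‖)
      (fun l => by rw [Real.norm_eq_abs, abs_of_nonneg (hq0 l)]; exact hqbound l), fun l => rfl⟩
  have hmaxpos : ∀ l, 0 < max (q l) s := fun l => lt_max_of_lt_right hs
  -- the normalizing multiplier r
  set rB : Λ →ᵇ ℝ := BoundedContinuousFunction.ofNormedAddCommGroup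
    (fun l => (Real.sqrt (max (q l) s))⁻¹)
    (Continuous.inv₀ (Real.continuous_sqrt.comp (hqcont.max continuous_const))
      (fun l => ne_of_gt (Real.sqrt_pos.mpr (hmaxpos l))))
    ((Real.sqrt s)⁻¹)
    (fun l => by
      rw [Real.norm_eq_abs, abs_of_nonneg (by positivity)]
      exact inv_anti₀ (Real.sqrt_pos.mpr hs)
        (Real.sqrt_le_sqrt (le_max_right _ _))) with hrB
  have hrBapp : ∀ l, rB l = (Real.sqrt (max (q l) s))⁻¹ := fun l => rfl
  have hrinv : ATWA.invR rB := fun t l => by rw [hrBapp, hrBapp, hqinv t l]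
  set v : Fin n → ET Λ := fun i => ATWA.rmul rB hrinv (z i) with hv
  -- the function P
  set PB : Λ →ᵇ ℝ := BoundedContinuousFunction.ofNormedAddCommGroup
    (fun l => q l / max (q l) s)
    (hqcont.div (hqcont.max continuous_const) (fun l => ne_of_gt (hmaxpos l)))
    1
    (fun l => by
      rw [Real.norm_eq_abs, abs_of_nonneg (div_nonneg (hq0 l) (hmaxpos l).le),
        div_le_one (hmaxpos l)]
      exact le_max_left _ _) with hPBdef
  have hPBapp : ∀ l, PB l = q l / max (q l) s := fun l => rfl
  have hPinv : ATWA.invR PB := fun t l => by rw [hPBapp, hPBapp, hqinv t l]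
  have hP0 : ∀ l, 0 ≤ PB l := fun l => by
    rw [hPBapp]; exact div_nonneg (hq0 l) (hmaxpos l).le
  have hPle1 : ∀ l, PB l ≤ 1 := fun l => by
    rw [hPBapp, div_le_one (hmaxpos l)]; exact le_max_left _ _
  -- the sum of the |v i|²
  have hPsum : ∀ l, (∑ i, ATWA.nsqB (v i) l) = PB l := by
    intro l
    have h1 : ∀ i ∈ Finset.univ, ATWA.nsqB (v i) l
        = (max (q l) s)⁻¹ * Complex.normSq ((z i : Λ →ᵇ ℂ) l) := by
      intro i _
      rw [ATWA.nsqB_apply, hv]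
      show Complex.normSq (((rB l : ℝ) : ℂ) * ((z i : Λ →ᵇ ℂ) l)) = _
      rw [map_mul, Complex.normSq_ofReal, hrBapp]
      rw [show (Real.sqrt (max (q l) s))⁻¹ * (Real.sqrt (max (q l) s))⁻¹
          = (Real.sqrt (max (q l) s) * Real.sqrt (max (q l) s))⁻¹ by rw [mul_inv]]
      rw [Real.mul_self_sqrt (hmaxpos l).le]
    rw [Finset.sum_congr rfl h1, ← Finset.mul_sum, hPBapp]
    rw [div_eq_mul_inv]
    ring
  -- the candidate inner derivation
  set φs : Fin n → StrongDual ℂ (ET Λ) := fun i => (-2⁻¹ : ℂ) • δ (v i) with hφs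
  set θ : (ET Λ) →SL[starRingEnd ℂ] (StrongDual ℂ (ET Λ)) :=
    ∑ i, ATWA.innerDer (v i) (φs i) with hθ
  have hθapp : ∀ a x : ET Λ, θ a x
      = ∑ i, ((starRingEnd ℂ) (φs i (jtripE (v i) x a)) - φs i (jtripE (v i) a x)) := by
    intro a x
    rw [hθ, ContinuousLinearMap.sum_apply, ContinuousLinearMap.sum_apply]
    exact Finset.sum_congr rfl (fun i _ => rfl)
  have hinner : IsInnerTernaryDerE θ := ⟨n, v, φs, fun a x => hθapp a x⟩
  have hθval : ∀ a x : ET Λ, θ a x = δ a (ATWA.rmul PB hPinv x) := by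
    intro a x
    rw [hθapp]
    have h1 : ∀ i ∈ Finset.univ,
        ((starRingEnd ℂ) (φs i (jtripE (v i) x a)) - φs i (jtripE (v i) a x))
        = δ a (ATWA.rmul (ATWA.nsqB (v i)) (ATWA.nsqB_inv (v i)) x) := by
      intro i _
      rw [hφs]
      exact ATWA.theta_term δ hδ (v i) a x
    rw [Finset.sum_congr rfl h1, ← map_sum (δ a)]
    congr 1
    refine ATWA.et_ext (fun l => ?_)
    rw [ATWA.et_sum_apply, ATWA.rmul_apply]
    have h2 : ∀ i ∈ Finset.univ,
        ((ATWA.rmul (ATWA.nsqB (v i)) (ATWA.nsqB_inv (v i)) x : ET Λ) : Λ →ᵇ ℂ) l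
        = ((ATWA.nsqB (v i) l : ℝ) : ℂ) * (x : Λ →ᵇ ℂ) l := by
      intro i _
      rw [ATWA.rmul_apply]
    rw [Finset.sum_congr rfl h2, ← Finset.sum_mul, ← Complex.ofReal_sum, hPsum l]
  -- the function β
  set βB : Λ →ᵇ ℝ := BoundedContinuousFunction.ofNormedAddCommGroup
    (fun l => Real.sqrt (1 - q l / max (q l) s))
    (Real.continuous_sqrt.comp (continuous_const.sub
      (hqcont.div (hqcont.max continuous_const) (fun l => ne_of_gt (hmaxpos l)))))
    1
    (fun l => by
      rw [Real.norm_eq_abs, abs_of_nonneg (Real.sqrt_nonneg _)]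
      rw [show (1:ℝ) = Real.sqrt 1 by rw [Real.sqrt_one]]
      apply Real.sqrt_le_sqrt
      have h := div_nonneg (hq0 l) (hmaxpos l).le
      rw [Real.sqrt_one]
      linarith) with hβB
  have hβapp : ∀ l, βB l = Real.sqrt (1 - q l / max (q l) s) := fun l => rfl
  have hβinv : ATWA.invR βB := fun t l => by rw [hβapp, hβapp, hqinv t l]
  have hβle1 : ∀ l, |βB l| ≤ 1 := by
    intro l
    rw [hβapp, abs_of_nonneg (Real.sqrt_nonneg _)]
    rw [show (1:ℝ) = Real.sqrt 1 by rw [Real.sqrt_one]]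
    apply Real.sqrt_le_sqrt
    have h := div_nonneg (hq0 l) (hmaxpos l).le
    rw [Real.sqrt_one]
    linarith
  have hsplit : ∀ x : ET Λ, x - ATWA.rmul PB hPinv x
      = ATWA.rmul βB hβinv (ATWA.rmul βB hβinv x) := by
    intro x
    refine ATWA.et_ext (fun l => ?_)
    have hlhs : ((x - ATWA.rmul PB hPinv x : ET Λ) : Λ →ᵇ ℂ) l
        = (x : Λ →ᵇ ℂ) l - ((PB l : ℝ) : ℂ) * (x : Λ →ᵇ ℂ) l := rfl
    rw [hlhs, ATWA.rmul_apply, ATWA.rmul_apply]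
    have hsq : (βB l) * (βB l) = 1 - PB l := by
      rw [hβapp, hPBapp]
      apply Real.mul_self_sqrt
      have h := hPle1 l
      rw [hPBapp] at h
      linarith
    have : ((βB l : ℝ) : ℂ) * (((βB l : ℝ) : ℂ) * (x : Λ →ᵇ ℂ) l)
        = (((βB l * βB l : ℝ)) : ℂ) * (x : Λ →ᵇ ℂ) l := by push_cast; ring
    rw [this, hsq]
    push_cast
    ring
  have hvan : ∀ (y : ET Λ) (l : Λ), s ≤ q l
      → ((ATWA.rmul βB hβinv y : ET Λ) : Λ →ᵇ ℂ) l = 0 := by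
    intro y l hl
    rw [ATWA.rmul_apply]
    have hβ0 : βB l = 0 := by
      rw [hβapp, max_eq_left hl, div_self (ne_of_gt (lt_of_lt_of_le hs hl))]
      simp
    rw [hβ0]
    simp
  have hkey : ∀ a x : ET Λ, ‖(δ - θ) a x‖ ≤ ε/2 * ‖a‖ * ‖x‖ := by
    intro a x
    have h0 : (δ - θ) a x = δ a x - θ a x := rfl
    rw [h0, hθval, ← map_sub (δ a), hsplit x,
      ← ATWA.moveR δ hδ βB hβinv a (ATWA.rmul βB hβinv x)]
    have h1 := htail (ATWA.rmul βB hβinv a) (ATWA.rmul βB hβinv x)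
      (fun l hl => hvan a l hl) (fun l hl => hvan x l hl)
    refine h1.trans ?_
    have hna : ‖ATWA.rmul βB hβinv a‖ ≤ 1 * ‖a‖ :=
      ATWA.rmul_norm_le βB hβinv a zero_le_one hβle1
    have hnx : ‖ATWA.rmul βB hβinv x‖ ≤ 1 * ‖x‖ :=
      ATWA.rmul_norm_le βB hβinv x zero_le_one hβle1
    rw [one_mul] at hna hnx
    have hε2 : (0:ℝ) ≤ ε/2 := by positivity
    have h2 : ε/2 * ‖ATWA.rmul βB hβinv a‖ * ‖ATWA.rmul βB hβinv x‖ ≤ ε/2 * ‖a‖ * ‖x‖ := by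
      gcongr
    exact h2
  refine ⟨θ, hinner, ?_⟩
  have hb : ‖δ - θ‖ ≤ ε/2 := by
    refine etDer_opNorm_le_bound _ (by positivity) (fun a => ?_)
    refine ContinuousLinearMap.opNorm_le_bound _ (by positivity) (fun x => ?_)
    exact hkey a x
  linarith
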